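/- arXiv:1603.01040 — 10 statements merged into one kernel-verified Lean document; each statement's English description precedes it below -/
import Mathlib

section
/- For every natural number γ, the smallest set of nonempty words over the alphabet {0,1,…,γ} that contains the one-letter word 0 and the two-letter words 0a and a0 for all a ∈ {1,…,γ}, and that is closed under all partial compositions, is exactly the set of nonempty words over {0,1,…,γ} containing exactly one occurrence of the letter 0. -/
/-- The partial composition `u ∘_i v` of words (1-based position `i`):
the `i`th letter of `u` is replaced by the word `v` whose letters are all
multiplied (for the `max` product) by this letter. -/
def pcomp (u : List ℕ) (i : ℕ) (v : List ℕ) : List ℕ :=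
  u.take (i - 1) ++ v.map (fun b => max (u.getD (i - 1) 0) b) ++ u.drop i

/-- The smallest set of words over `{0, 1, …, γ}` containing the word `0`,
the words `0a` and `a0` for `a ∈ {1, …, γ}`, and closed under all partial
compositions. -/
inductive DiasGen (γ : ℕ) : List ℕ → Prop
  | unit : DiasGen γ [0]
  | genL : ∀ a : ℕ, 1 ≤ a → a ≤ γ → DiasGen γ [0, a]
  | genR : ∀ a : ℕ, 1 ≤ a → a ≤ γ → DiasGen γ [a, 0]
  | comp : ∀ (u v : List ℕ) (i : ℕ), DiasGen γ u → DiasGen γ v →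
      1 ≤ i → i ≤ u.length → DiasGen γ (pcomp u i v)

lemma dias_backward (γ : ℕ) : ∀ n (w : List ℕ), w.length = n → w ≠ [] →
    (∀ l ∈ w, l ≤ γ) → w.count 0 = 1 → DiasGen γ w := by
  intro n
  induction n using Nat.strong_induction_on with
  | _ n ih =>
    intro w hlen hne hb hc
    have h0 : (0:ℕ) ∈ w := by
      by_contra h
      simp [List.count_eq_zero_of_not_mem h] at hc
    obtain ⟨l, r, rfl⟩ := List.append_of_mem h0
    have hcl : l.count 0 = 0 ∧ r.count 0 = 0 := by
      simp [List.count_append, List.count_cons] at hc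
      omega
    rcases l.eq_nil_or_concat with rfl | ⟨l', a, rfl⟩
    · rcases r with _ | ⟨b, r'⟩
      · exact DiasGen.unit
      · have hb1 : 1 ≤ b := by
          have : b ≠ 0 := by
            intro hb0
            have := hcl.2
            simp [hb0, List.count_cons] at this
          omega
        have hbγ : b ≤ γ := hb b (by simp)
        have hprev : DiasGen γ (0 :: r') := by
          refine ih (r'.length + 1) (by simp at hlen ⊢; omega) (0 :: r') (by simp)
            (by simp) ?_ ?_
          · intro x hx
            apply hb
            simp at hx ⊢
            tauto
          · have := hcl.2
            simp [List.count_cons] at this ⊢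
            omega
        have := DiasGen.comp (0 :: r') [0, b] 1 hprev (DiasGen.genL b hb1 hbγ)
          le_rfl (by simp)
        simpa [pcomp] using this
    · have ha1 : 1 ≤ a := by
        have : a ≠ 0 := by
          intro ha0
          have := hcl.1
          simp [ha0, List.count_append, List.count_cons] at this
        omega
      have haγ : a ≤ γ := hb a (by simp)
      have hprev : DiasGen γ (l' ++ 0 :: r) := by
        refine ih (l' ++ 0 :: r).length (by simp at hlen ⊢; omega) _ rfl (by simp) ?_ ?_
        · intro x hx
          apply hb
          simp at hx ⊢
          tauto
        · have h1 := hcl.1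
          simp [List.count_append, List.count_cons] at h1 ⊢
          omega
      have := DiasGen.comp (l' ++ 0 :: r) [a, 0] (l'.length + 1) hprev
        (DiasGen.genR a ha1 haγ) (by omega) (by simp)
      have hmidlt : l'.length < (l' ++ 0 :: r).length := by simp
      have h3 : (l' ++ 0 :: r).getD l'.length 0 = 0 := by
        rw [List.getD_eq_getElem _ _ hmidlt, List.getElem_append_right le_rfl]
        simp
      have heq : pcomp (l' ++ 0 :: r) (l'.length + 1) [a, 0]
          = (l' ++ [a]) ++ 0 :: r := by
        unfold pcomp
        rw [show l'.length + 1 - 1 = l'.length from rfl, h3, List.take_left]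
        have h2 : (l' ++ 0 :: r).drop (l'.length + 1) = r := by
          rw [show l' ++ 0 :: r = (l' ++ [0]) ++ r by simp,
            show l'.length + 1 = (l' ++ [0]).length by simp, List.drop_left]
        rw [h2]
        simp
      rw [heq] at this
      simpa using this

theorem stmt0 (γ : ℕ) (w : List ℕ) :
    DiasGen γ w ↔ (w ≠ [] ∧ (∀ l ∈ w, l ≤ γ) ∧ w.count 0 = 1) := by
  constructor
  · intro h
    induction h with
    | unit => simp
    | genL a h1 h2 =>
      refine ⟨by simp, ?_, by simp [List.count_cons]; omega⟩
      intro x hx; simp at hx; rcases hx with h | h <;> omega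
    | genR a h1 h2 =>
      refine ⟨by simp, ?_, by simp [List.count_cons]; omega⟩
      intro x hx; simp at hx; rcases hx with h | h <;> omega
    | comp u v i hu hv hi1 hi2 ihu ihv =>
      obtain ⟨hune, hub, huc⟩ := ihu
      obtain ⟨hvne, hvb, hvc⟩ := ihv
      have hlt : i - 1 < u.length := by omega
      have hgetD : u.getD (i - 1) 0 = u[i-1] := List.getD_eq_getElem u 0 hlt
      have hdec : u = u.take (i-1) ++ u[i-1] :: u.drop i := by
        conv_lhs => rw [← List.take_append_drop (i-1) u]
        rw [List.drop_eq_getElem_cons hlt, show i - 1 + 1 = i by omega]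
      refine ⟨?_, ?_, ?_⟩
      · simp [pcomp, hvne]
      · intro x hx
        rw [pcomp] at hx
        simp only [List.mem_append, List.mem_map] at hx
        rcases hx with (hx | ⟨b, hb, hbe⟩) | hx
        · exact hub x (List.mem_of_mem_take hx)
        · subst hbe
          rw [hgetD]
          exact max_le (hub _ (List.getElem_mem hlt)) (hvb b hb)
        · exact hub x (List.mem_of_mem_drop hx)
      · have hcu : (u.take (i-1)).count 0 + (if u[i-1] = 0 then 1 else 0)
            + (u.drop i).count 0 = 1 := by
          conv_rhs => rw [← huc]
          conv_rhs => rw [hdec]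
          simp [List.count_append, List.count_cons]
          split <;> omega
        rw [pcomp, List.count_append, List.count_append, hgetD]
        by_cases h : u[i-1] = 0
        · have : (v.map fun b => max u[i-1] b) = v := by
            simp [h]
          rw [this]
          simp [h] at hcu
          omega
        · have : (v.map fun b => max u[i-1] b).count 0 = 0 := by
            rw [List.count_eq_zero]
            intro hm
            rw [List.mem_map] at hm
            obtain ⟨b, hbv, hb⟩ := hm
            have hle : u[i-1] ≤ 0 := hb ▸ le_max_left _ _
            omega
          simp [h] at hcu
          omega
  · rintro ⟨hne, hb, hc⟩
    exact dias_backward γ w.length w rfl hne hb hc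
end

section
/- For every natural number γ and every syntax tree t on G_γ, the word word_γ(t) contains exactly one occurrence of the letter 0; moreover, for every word x over {0,1,…,γ} with exactly one occurrence of 0, the hook syntax tree hook_γ(x) satisfies word_γ(hook_γ(x)) = x. In particular, word_γ is a surjection from the set of syntax trees on G_γ with n leaves onto Dias_γ(n) for every n ≥ 1. -/
/-- Syntax trees on `G_γ = {⊣_a, ⊢_a : a ∈ {1, …, γ}}`: complete planar binary
trees whose internal nodes carry a label `⊣_a` (`dashv a`) or `⊢_a` (`vdash a`),
the index `a : Fin γ` encoding the letter `a + 1 ∈ {1, …, γ}`. -/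
inductive STree (γ : ℕ) : Type
  | leaf : STree γ
  | dashv (a : Fin γ) (l r : STree γ) : STree γ
  | vdash (a : Fin γ) (l r : STree γ) : STree γ

/-- `hA a` replaces every letter smaller than `a` by `a`. -/
def hA (a : ℕ) (w : List ℕ) : List ℕ := w.map (fun b => max a b)

/-- The word associated with a syntax tree. -/
def wordOf {γ : ℕ} : STree γ → List ℕ
  | .leaf => [0]
  | .dashv a l r => wordOf l ++ hA (a.val + 1) (wordOf r)
  | .vdash a l r => hA (a.val + 1) (wordOf l) ++ wordOf r

/-- Number of leaves (the arity) of a syntax tree. -/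
def nleaves {γ : ℕ} : STree γ → ℕ
  | .leaf => 1
  | .dashv _ l r => nleaves l + nleaves r
  | .vdash _ l r => nleaves l + nleaves r

/-- The right comb with internal nodes labeled, from top to bottom, by
`⊢_{u_1}, …, ⊢_{u_{|u|}}`, each left child being a leaf. -/
def rightComb {γ : ℕ} : List (Fin γ) → STree γ
  | [] => .leaf
  | a :: u => .vdash a .leaf (rightComb u)

/-- The hook syntax tree associated with the word `u0v`: a left comb labeled
from bottom to top by `⊣_{v_1}, …, ⊣_{v_{|v|}}` (right children being leaves)
grafted on top of the right comb associated to `u`. -/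
def hook {γ : ℕ} (u v : List (Fin γ)) : STree γ :=
  v.foldl (fun t b => .dashv b t .leaf) (rightComb u)

lemma hA_count_zero (a : ℕ) (w : List ℕ) : (hA (a+1) w).count 0 = 0 := by
  simp only [hA, List.count_eq_zero, List.mem_map]
  rintro ⟨b, _, hb⟩
  omega

lemma count_wordOf {γ : ℕ} (t : STree γ) : (wordOf t).count 0 = 1 := by
  induction t with
  | leaf => simp [wordOf]
  | dashv a l r ihl ihr => simp [wordOf, List.count_append, ihl, hA_count_zero]
  | vdash a l r ihl ihr => simp [wordOf, List.count_append, ihr, hA_count_zero]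

lemma le_wordOf {γ : ℕ} (t : STree γ) : ∀ l ∈ wordOf t, l ≤ γ := by
  induction t with
  | leaf => simp [wordOf]
  | dashv a l r ihl ihr =>
    intro x hx
    simp only [wordOf, List.mem_append, hA, List.mem_map] at hx
    rcases hx with hx | ⟨b, hb, rfl⟩
    · exact ihl x hx
    · have := ihr b hb
      have := a.isLt
      omega
  | vdash a l r ihl ihr =>
    intro x hx
    simp only [wordOf, List.mem_append, hA, List.mem_map] at hx
    rcases hx with ⟨b, hb, rfl⟩ | hx
    · have := ihl b hb
      have := a.isLt
      omega
    · exact ihr x hx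

lemma wordOf_rightComb {γ : ℕ} (u : List (Fin γ)) :
    wordOf (rightComb u) = u.map (fun a => a.val + 1) ++ [0] := by
  induction u with
  | nil => simp [rightComb, wordOf]
  | cons a u ih => simp [rightComb, wordOf, ih, hA]

lemma wordOf_foldl {γ : ℕ} (v : List (Fin γ)) (t : STree γ) :
    wordOf (v.foldl (fun t b => .dashv b t .leaf) t)
      = wordOf t ++ v.map (fun a => a.val + 1) := by
  induction v generalizing t with
  | nil => simp
  | cons a v ih => simp [ih, wordOf, hA]

lemma wordOf_hook {γ : ℕ} (u v : List (Fin γ)) :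
    wordOf (hook u v)
      = (u.map (fun a => a.val + 1)) ++ 0 :: (v.map (fun a => a.val + 1)) := by
  simp [hook, wordOf_foldl, wordOf_rightComb]

lemma nleaves_eq_length {γ : ℕ} (t : STree γ) : nleaves t = (wordOf t).length := by
  induction t with
  | leaf => simp [nleaves, wordOf]
  | dashv a l r ihl ihr => simp [nleaves, wordOf, ihl, ihr, hA]
  | vdash a l r ihl ihr => simp [nleaves, wordOf, ihl, ihr, hA]

lemma lift_list (γ : ℕ) : ∀ xs : List ℕ, (∀ l ∈ xs, l ≤ γ) → (0 ∉ xs) →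
    ∃ v : List (Fin γ), v.map (fun a => a.val + 1) = xs := by
  intro xs
  induction xs with
  | nil => exact fun _ _ => ⟨[], rfl⟩
  | cons a xs ih =>
    intro h1 h2
    obtain ⟨v, hv⟩ := ih (fun l hl => h1 l (List.mem_cons_of_mem _ hl))
      (fun h => h2 (List.mem_cons_of_mem _ h))
    have ha : a ≤ γ := h1 a List.mem_cons_self
    have ha0 : a ≠ 0 := fun h => h2 (h ▸ List.mem_cons_self)
    exact ⟨⟨a - 1, by omega⟩ :: v, by simp [hv]; omega⟩

/-- `word_γ` of any syntax tree has exactly one `0` (and letters at most `γ`);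
`word_γ (hook_γ (u0v)) = u0v`; and `word_γ` is surjective from syntax trees with
`n` leaves onto `Dias_γ(n)` for every `n ≥ 1`. -/
theorem stmt1 (γ : ℕ) :
    (∀ t : STree γ, (wordOf t).count 0 = 1 ∧ ∀ l ∈ wordOf t, l ≤ γ) ∧
    (∀ u v : List (Fin γ),
      wordOf (hook u v) =
        (u.map (fun a => a.val + 1)) ++ 0 :: (v.map (fun a => a.val + 1))) ∧
    (∀ n : ℕ, 1 ≤ n → ∀ x : List ℕ, x.count 0 = 1 → (∀ l ∈ x, l ≤ γ) →
      x.length = n → ∃ t : STree γ, nleaves t = n ∧ wordOf t = x) := by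
  refine ⟨fun t => ⟨count_wordOf t, le_wordOf t⟩, wordOf_hook, ?_⟩
  intro n _ x hc hle hlen
  have h0 : (0 : ℕ) ∈ x := by
    rw [← List.count_pos_iff]; omega
  obtain ⟨s, t, rfl⟩ := List.append_of_mem h0
  have hcs : s.count 0 = 0 ∧ t.count 0 = 0 := by
    simp [List.count_append, List.count_cons] at hc
    omega
  obtain ⟨u, hu⟩ := lift_list γ s (fun l hl => hle l (by simp [hl]))
    (by rw [← List.count_eq_zero]; exact hcs.1)
  obtain ⟨v, hv⟩ := lift_list γ t (fun l hl => hle l (by simp [hl]))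
    (by rw [← List.count_eq_zero]; exact hcs.2)
  refine ⟨hook u v, ?_, ?_⟩
  · rw [nleaves_eq_length, wordOf_hook, hu, hv, hlen]
  · rw [wordOf_hook, hu, hv]
end

section
/- For every natural number γ and all syntax trees s and t on G_γ, if s rewrites into t in one step by the rewrite rule →_γ, then word_γ(s) = word_γ(t); consequently, any two syntax trees related by the equivalence relation generated by →_γ have the same image under word_γ. -/
/-- Root patterns of the rewrite rule `→_γ`. -/
inductive RootRW (γ : ℕ) : STree γ → STree γ → Prop
  | r1 (a a' : Fin γ) (x y z : STree γ) :
      RootRW γ (.vdash a' x (.dashv a y z)) (.dashv a (.vdash a' x y) z)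
  | r2 (a b : Fin γ) (h : a < b) (x y z : STree γ) :
      RootRW γ (.dashv a x (.vdash b y z)) (.dashv a (.dashv b x y) z)
  | r3 (a b : Fin γ) (h : a < b) (x y z : STree γ) :
      RootRW γ (.vdash a (.dashv b x y) z) (.vdash a x (.vdash b y z))
  | r4 (a b : Fin γ) (h : a < b) (x y z : STree γ) :
      RootRW γ (.dashv a x (.dashv b y z)) (.dashv b (.dashv a x y) z)
  | r5 (a b : Fin γ) (h : a < b) (x y z : STree γ) :
      RootRW γ (.vdash a (.vdash b x y) z) (.vdash b x (.vdash a y z))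
  | r6 (c d : Fin γ) (h : c ≤ d) (x y z : STree γ) :
      RootRW γ (.dashv d x (.dashv c y z)) (.dashv d (.dashv d x y) z)
  | r7 (c d : Fin γ) (h : c ≤ d) (x y z : STree γ) :
      RootRW γ (.dashv d x (.vdash c y z)) (.dashv d (.dashv d x y) z)
  | r8 (c d : Fin γ) (h : c ≤ d) (x y z : STree γ) :
      RootRW γ (.vdash d (.dashv c x y) z) (.vdash d x (.vdash d y z))
  | r9 (c d : Fin γ) (h : c ≤ d) (x y z : STree γ) :
      RootRW γ (.vdash d (.vdash c x y) z) (.vdash d x (.vdash d y z))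

/-- One-step rewriting by `→_γ`: a root pattern applied anywhere inside a tree. -/
inductive Step (γ : ℕ) : STree γ → STree γ → Prop
  | here {s t : STree γ} : RootRW γ s t → Step γ s t
  | dashvL (a : Fin γ) {s s' : STree γ} (r : STree γ) :
      Step γ s s' → Step γ (.dashv a s r) (.dashv a s' r)
  | dashvR (a : Fin γ) (l : STree γ) {s s' : STree γ} :
      Step γ s s' → Step γ (.dashv a l s) (.dashv a l s')
  | vdashL (a : Fin γ) {s s' : STree γ} (r : STree γ) :
      Step γ s s' → Step γ (.vdash a s r) (.vdash a s' r)
  | vdashR (a : Fin γ) (l : STree γ) {s s' : STree γ} :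
      Step γ s s' → Step γ (.vdash a l s) (.vdash a l s')

lemma hA_append (a : ℕ) (w v : List ℕ) : hA a (w ++ v) = hA a w ++ hA a v := by
  simp [hA]

lemma hA_hA (a b : ℕ) (w : List ℕ) : hA a (hA b w) = hA (max a b) w := by
  simp only [hA, List.map_map]
  congr 1
  funext x
  simp only [Function.comp_apply]
  omega

lemma hA_eq_of_le {a b : ℕ} (h : a ≤ b) (w : List ℕ) : hA a (hA b w) = hA b w := by
  rw [hA_hA, Nat.max_eq_right h]

lemma root_word {γ : ℕ} {s t : STree γ} (h : RootRW γ s t) : wordOf s = wordOf t := by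
  cases h with
  | r1 a a' x y z => simp [wordOf, hA_append, List.append_assoc]
  | r2 a b h x y z =>
      simp only [wordOf, hA_append, hA_hA, List.append_assoc]
      rw [Nat.max_eq_right (by omega : a.val + 1 ≤ b.val + 1)]
  | r3 a b h x y z =>
      simp only [wordOf, hA_append, hA_hA, List.append_assoc]
      rw [Nat.max_eq_right (by omega : a.val + 1 ≤ b.val + 1)]
  | r4 a b h x y z =>
      simp only [wordOf, hA_append, hA_hA, List.append_assoc]
      rw [Nat.max_eq_right (by omega : a.val + 1 ≤ b.val + 1)]
  | r5 a b h x y z =>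
      simp only [wordOf, hA_append, hA_hA, List.append_assoc]
      rw [Nat.max_eq_right (by omega : a.val + 1 ≤ b.val + 1)]
  | r6 c d h x y z =>
      simp only [wordOf, hA_append, hA_hA, List.append_assoc]
      rw [Nat.max_eq_left (by omega : c.val + 1 ≤ d.val + 1)]
  | r7 c d h x y z =>
      simp only [wordOf, hA_append, hA_hA, List.append_assoc]
      rw [Nat.max_eq_left (by omega : c.val + 1 ≤ d.val + 1)]
  | r8 c d h x y z =>
      simp only [wordOf, hA_append, hA_hA, List.append_assoc]
      rw [Nat.max_eq_left (by omega : c.val + 1 ≤ d.val + 1)]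
  | r9 c d h x y z =>
      simp only [wordOf, hA_append, hA_hA, List.append_assoc]
      rw [Nat.max_eq_left (by omega : c.val + 1 ≤ d.val + 1)]

lemma step_word {γ : ℕ} {s t : STree γ} (h : Step γ s t) : wordOf s = wordOf t := by
  induction h with
  | here h => exact root_word h
  | dashvL a r _ ih => simp [wordOf, ih]
  | dashvR a l _ ih => simp [wordOf, ih]
  | vdashL a r _ ih => simp [wordOf, ih]
  | vdashR a l _ ih => simp [wordOf, ih]

/-- One-step rewriting by `→_γ` preserves `word_γ`, hence so does the
equivalence relation generated by `→_γ`. -/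
theorem stmt2 (γ : ℕ) :
    (∀ s t : STree γ, Step γ s t → wordOf s = wordOf t) ∧
    (∀ s t : STree γ, Relation.EqvGen (Step γ) s t → wordOf s = wordOf t) := by
  refine ⟨fun s t h => step_word h, fun s t h => ?_⟩
  induction h with
  | rel _ _ h => exact step_word h
  | refl => rfl
  | symm _ _ _ ih => exact ih.symm
  | trans _ _ _ _ _ ih1 ih2 => exact ih1.trans ih2
end

section
/- For every natural number γ, if (φ_n)_{n≥1} is a family of bijections φ_n : Dias_γ(n) → Dias_γ(n) satisfying φ_{n+m−1}(u ∘_i v) = φ_n(u) ∘_i φ_m(v) for all u ∈ Dias_γ(n), v ∈ Dias_γ(m) and i ∈ {1,…,n}, then every φ_n is the identity map; that is, the only operad automorphism of the set-operad Dias_γ is the identity. -/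
/-- The set of words over `{0, 1, …, γ}` with exactly one occurrence of `0`. -/
def DiasSet (γ : ℕ) : Set (List ℕ) := {w | w.count 0 = 1 ∧ ∀ l ∈ w, l ≤ γ}

lemma pcomp_zero_head (t v : List ℕ) : pcomp (0 :: t) 1 v = v ++ t := by
  simp [pcomp]

lemma dias1_eq {γ : ℕ} {w : List ℕ} (hw : w ∈ DiasSet γ) (hl : w.length = 1) :
    w = [0] := by
  obtain ⟨x, rfl⟩ : ∃ x, w = [x] := by
    match w, hl with | [x], _ => exact ⟨x, rfl⟩
  obtain ⟨hc, -⟩ := hw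
  by_cases h : x = 0
  · simp [h]
  · simp [List.count_cons, h] at hc

lemma dias2_cases {γ : ℕ} {w : List ℕ} (hw : w ∈ DiasSet γ) (hl : w.length = 2) :
    ∃ a, 1 ≤ a ∧ a ≤ γ ∧ (w = [0, a] ∨ w = [a, 0]) := by
  obtain ⟨x, y, rfl⟩ : ∃ x y, w = [x, y] := by
    match w, hl with | [x, y], _ => exact ⟨x, y, rfl⟩
  obtain ⟨hc, hb⟩ := hw
  have hx := hb x (by simp)
  have hy := hb y (by simp)
  by_cases h : x = 0 <;> by_cases h' : y = 0 <;>
    simp [List.count_cons, h, h'] at hc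
  · subst h
    exact ⟨y, by omega, hy, Or.inl rfl⟩
  · subst h'
    exact ⟨x, by omega, hx, Or.inr rfl⟩

lemma L_mem {γ a : ℕ} (h1 : 1 ≤ a) (h2 : a ≤ γ) : [0, a] ∈ DiasSet γ := by
  refine ⟨?_, ?_⟩
  · have : a ≠ 0 := by omega
    simp [List.count_cons, this]
  · intro l hl; simp at hl; rcases hl with h | h <;> omega

lemma R_mem {γ a : ℕ} (h1 : 1 ≤ a) (h2 : a ≤ γ) : [a, 0] ∈ DiasSet γ := by
  refine ⟨?_, ?_⟩
  · have : a ≠ 0 := by omega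
    simp [List.count_cons, this]
  · intro l hl; simp at hl; rcases hl with h | h <;> omega

lemma append_mem {γ a : ℕ} {v : List ℕ} (hv : v ∈ DiasSet γ) (h1 : 1 ≤ a) (h2 : a ≤ γ) :
    v ++ [a] ∈ DiasSet γ := by
  obtain ⟨hc, hb⟩ := hv
  refine ⟨?_, ?_⟩
  · rw [List.count_append]
    have : List.count 0 [a] = 0 := by
      have : a ≠ 0 := by omega
      simp [List.count_cons, this]
    omega
  · intro l hl
    rcases List.mem_append.1 hl with h | h
    · exact hb l h
    · simp at h; omega

lemma mono_id {γ : ℕ} (f : ℕ → ℕ)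
    (hf : ∀ a, 1 ≤ a → a ≤ γ → 1 ≤ f a ∧ f a ≤ γ)
    (hmono : ∀ a b, 1 ≤ a → a ≤ b → b ≤ γ → f a ≤ f b)
    (hinj : ∀ a b, 1 ≤ a → a ≤ γ → 1 ≤ b → b ≤ γ → f a = f b → a = b) :
    ∀ a, 1 ≤ a → a ≤ γ → f a = a := by
  have hup : ∀ a, 1 ≤ a → a ≤ γ → a ≤ f a := by
    intro a
    induction a with
    | zero => omega
    | succ n ih =>
      intro _ hγ
      by_cases hn : 1 ≤ n
      · have h1 := ih hn (by omega)
        have h2 : f n ≤ f (n + 1) := hmono n (n + 1) hn (by omega) hγ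
        have h3 : f n ≠ f (n + 1) := fun h =>
          by have := hinj n (n + 1) hn (by omega) (by omega) hγ h; omega
        omega
      · have := hf (n + 1) (by omega) hγ
        omega
  have hdown : ∀ d a, 1 ≤ a → a + d = γ → f a ≤ a := by
    intro d
    induction d with
    | zero => intro a ha hg; have := hf a ha (by omega); omega
    | succ n ih =>
      intro a ha hg
      have h1 : f (a + 1) ≤ a + 1 := ih (a + 1) (by omega) (by omega)
      have h2 : f a ≤ f (a + 1) := hmono a (a + 1) ha (by omega) (by omega)
      have h3 : f a ≠ f (a + 1) := fun h =>
        by have := hinj a (a + 1) ha (by omega) (by omega) (by omega) h; omega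
      omega
  intro a ha hγ
  have h1 := hup a ha hγ
  have h2 := hdown (γ - a) a ha (by omega)
  omega

/-- Any family of arity-preserving bijections of `Dias_γ` commuting with all
partial compositions is the identity. -/
theorem stmt6 (γ : ℕ) (φ : List ℕ → List ℕ)
    (hbij : ∀ n : ℕ, Set.BijOn φ {w | w ∈ DiasSet γ ∧ w.length = n}
      {w | w ∈ DiasSet γ ∧ w.length = n})
    (hcomp : ∀ u ∈ DiasSet γ, ∀ v ∈ DiasSet γ, ∀ i : ℕ, 1 ≤ i → i ≤ u.length →
      φ (pcomp u i v) = pcomp (φ u) i (φ v)) :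
    ∀ w ∈ DiasSet γ, φ w = w := by
  -- φ [0] = [0]
  have h00 : ([0] : List ℕ) ∈ DiasSet γ := ⟨by simp, by simp⟩
  have h0 : φ [0] = [0] := by
    have := (hbij 1).mapsTo (show ([0] : List ℕ) ∈ _ from ⟨h00, rfl⟩)
    exact dias1_eq this.1 this.2
  -- Step A : φ maps "left" words of length 2 to "left" words.
  have stepA : ∀ a, 1 ≤ a → a ≤ γ → ∃ c, 1 ≤ c ∧ c ≤ γ ∧ φ [0, a] = [0, c] := by
    intro a ha1 ha2
    have hLa : [0, a] ∈ DiasSet γ := L_mem ha1 ha2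
    have hφLa := (hbij 2).mapsTo (show ([0, a] : List ℕ) ∈ _ from ⟨hLa, rfl⟩)
    obtain ⟨c, hc1, hc2, hLR⟩ := dias2_cases hφLa.1 hφLa.2
    rcases hLR with hL | hR
    · exact ⟨c, hc1, hc2, hL⟩
    · exfalso
      -- φ [0,a] = [c,0] : find y with φ y = [0,c]
      obtain ⟨y, hy_mem, hy⟩ := (hbij 2).surjOn
        (show ([0, c] : List ℕ) ∈ _ from ⟨L_mem hc1 hc2, rfl⟩)
      have e1 : φ (y ++ [a]) = pcomp [c, 0] 1 [0, c] := by
        have := hcomp [0, a] hLa y hy_mem.1 1 le_rfl (by simp)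
        rwa [show ([0, a] : List ℕ) = 0 :: [a] from rfl, pcomp_zero_head, hR, hy] at this
      have e2 : φ ([0, a] ++ [a]) = pcomp [c, 0] 1 [c, 0] := by
        have := hcomp [0, a] hLa [0, a] hLa 1 le_rfl (by simp)
        rwa [show ([0, a] : List ℕ) = 0 :: [a] from rfl, pcomp_zero_head, hR] at this
      have e3 : pcomp [c, 0] 1 [0, c] = pcomp [c, 0] 1 [c, 0] := by
        simp [pcomp]
      have hy3 : y ++ [a] ∈ DiasSet γ := append_mem hy_mem.1 ha1 ha2
      have hyl : (y ++ [a]).length = 3 := by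
        simp [hy_mem.2]
      have hL3 : ([0, a] ++ [a] : List ℕ) ∈ DiasSet γ := append_mem hLa ha1 ha2
      have heq : y ++ [a] = [0, a] ++ [a] :=
        (hbij 3).injOn ⟨hy3, hyl⟩ ⟨hL3, rfl⟩ (by rw [e1, e2, e3])
      have hy0 : y = [0, a] := List.append_inj_left' heq rfl
      rw [hy0, hR] at hy
      simp at hy
      omega
  -- Step B : φ maps "right" words of length 2 to "right" words.
  have stepB : ∀ a, 1 ≤ a → a ≤ γ → ∃ c, 1 ≤ c ∧ c ≤ γ ∧ φ [a, 0] = [c, 0] := by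
    intro a ha1 ha2
    have hLa : [0, a] ∈ DiasSet γ := L_mem ha1 ha2
    have hRa : [a, 0] ∈ DiasSet γ := R_mem ha1 ha2
    have hφRa := (hbij 2).mapsTo (show ([a, 0] : List ℕ) ∈ _ from ⟨hRa, rfl⟩)
    obtain ⟨c, hc1, hc2, hLR⟩ := dias2_cases hφRa.1 hφRa.2
    rcases hLR with hL | hR
    · exfalso
      have e1 := hcomp [a, 0] hRa [0, a] hLa 1 le_rfl (by simp)
      have e2 := hcomp [a, 0] hRa [a, 0] hRa 1 le_rfl (by simp)
      rw [hL, show ([0, c] : List ℕ) = 0 :: [c] from rfl, pcomp_zero_head] at e1 e2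
      have e3 : pcomp [a, 0] 1 [0, a] = pcomp [a, 0] 1 [a, 0] := by
        simp [pcomp]
      have heq : φ [0, a] ++ [c] = [0, c] ++ [c] := by
        rw [← e1, ← e2, e3]
      have heq2 : φ [0, a] = φ [a, 0] := by
        rw [hL]
        exact List.append_inj_left' heq rfl
      have := (hbij 2).injOn
        (show ([0, a] : List ℕ) ∈ _ from ⟨hLa, rfl⟩)
        (show ([a, 0] : List ℕ) ∈ _ from ⟨hRa, rfl⟩) heq2
      simp at this
      omega
    · exact ⟨c, hc1, hc2, hR⟩
  -- the induced maps on letters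
  set f : ℕ → ℕ := fun a => (φ [0, a]).getD 1 0 with hf_def
  set g : ℕ → ℕ := fun a => (φ [a, 0]).getD 0 0 with hg_def
  have hfL : ∀ a, 1 ≤ a → a ≤ γ → φ [0, a] = [0, f a] ∧ 1 ≤ f a ∧ f a ≤ γ := by
    intro a ha1 ha2
    obtain ⟨c, hc1, hc2, hc⟩ := stepA a ha1 ha2
    have : f a = c := by simp [hf_def, hc]
    rw [this, hc]
    exact ⟨rfl, hc1, hc2⟩
  have hgR : ∀ a, 1 ≤ a → a ≤ γ → φ [a, 0] = [g a, 0] ∧ 1 ≤ g a ∧ g a ≤ γ := by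
    intro a ha1 ha2
    obtain ⟨c, hc1, hc2, hc⟩ := stepB a ha1 ha2
    have : g a = c := by simp [hg_def, hc]
    rw [this, hc]
    exact ⟨rfl, hc1, hc2⟩
  -- f is monotone
  have hfmono : ∀ a b, 1 ≤ a → a ≤ b → b ≤ γ → f a ≤ f b := by
    intro a b ha hab hb
    have ha2 : a ≤ γ := le_trans hab hb
    have hb1 : 1 ≤ b := le_trans ha hab
    have hLa : [0, a] ∈ DiasSet γ := L_mem ha ha2
    have hLb : [0, b] ∈ DiasSet γ := L_mem hb1 hb
    have e1 := hcomp [0, a] hLa [0, b] hLb 2 (by omega) (by simp)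
    have e2 := hcomp [0, b] hLb [0, a] hLa 1 le_rfl (by simp)
    have elhs : pcomp [0, a] 2 [0, b] = pcomp [0, b] 1 [0, a] := by
      simp [pcomp, Nat.max_eq_right hab]
    rw [(hfL a ha ha2).1, (hfL b hb1 hb).1] at e1 e2
    rw [elhs, e2] at e1
    have : pcomp [0, f a] 2 [0, f b] = [0, f a, max (f a) (f b)] := by
      simp [pcomp]
    rw [this] at e1
    have : pcomp [0, f b] 1 [0, f a] = [0, f a, f b] := by
      simp [pcomp]
    rw [this] at e1
    have : max (f a) (f b) = f b := by
      simpa using e1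
    omega
  -- g is monotone
  have hgmono : ∀ a b, 1 ≤ a → a ≤ b → b ≤ γ → g a ≤ g b := by
    intro a b ha hab hb
    have ha2 : a ≤ γ := le_trans hab hb
    have hb1 : 1 ≤ b := le_trans ha hab
    have hRa : [a, 0] ∈ DiasSet γ := R_mem ha ha2
    have hRb : [b, 0] ∈ DiasSet γ := R_mem hb1 hb
    have e1 := hcomp [a, 0] hRa [b, 0] hRb 1 le_rfl (by simp)
    have e2 := hcomp [b, 0] hRb [a, 0] hRa 2 (by omega) (by simp)
    have elhs : pcomp [a, 0] 1 [b, 0] = pcomp [b, 0] 2 [a, 0] := by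
      simp [pcomp, Nat.max_eq_right hab]
    rw [(hgR a ha ha2).1, (hgR b hb1 hb).1] at e1 e2
    rw [elhs, e2] at e1
    have h1 : pcomp [g a, 0] 1 [g b, 0] = [max (g a) (g b), g a, 0] := by
      simp [pcomp]
    have h2 : pcomp [g b, 0] 2 [g a, 0] = [g b, g a, 0] := by
      simp [pcomp]
    rw [h1, h2] at e1
    have : max (g a) (g b) = g b := by simpa using e1
    omega
  -- injectivity of f and g
  have hfinj : ∀ a b, 1 ≤ a → a ≤ γ → 1 ≤ b → b ≤ γ → f a = f b → a = b := by
    intro a b ha1 ha2 hb1 hb2 hfe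
    have e : φ [0, a] = φ [0, b] := by
      rw [(hfL a ha1 ha2).1, (hfL b hb1 hb2).1, hfe]
    have := (hbij 2).injOn
      (show ([0, a] : List ℕ) ∈ _ from ⟨L_mem ha1 ha2, rfl⟩)
      (show ([0, b] : List ℕ) ∈ _ from ⟨L_mem hb1 hb2, rfl⟩) e
    simpa using this
  have hginj : ∀ a b, 1 ≤ a → a ≤ γ → 1 ≤ b → b ≤ γ → g a = g b → a = b := by
    intro a b ha1 ha2 hb1 hb2 hge
    have e : φ [a, 0] = φ [b, 0] := by
      rw [(hgR a ha1 ha2).1, (hgR b hb1 hb2).1, hge]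
    have := (hbij 2).injOn
      (show ([a, 0] : List ℕ) ∈ _ from ⟨R_mem ha1 ha2, rfl⟩)
      (show ([b, 0] : List ℕ) ∈ _ from ⟨R_mem hb1 hb2, rfl⟩) e
    simpa using this
  have hfid := mono_id f (fun a h1 h2 => ⟨(hfL a h1 h2).2.1, (hfL a h1 h2).2.2⟩) hfmono hfinj
  have hgid := mono_id g (fun a h1 h2 => ⟨(hgR a h1 h2).2.1, (hgR a h1 h2).2.2⟩) hgmono hginj
  -- every length-2 word is fixed
  have key2 : ∀ v ∈ DiasSet γ, v.length = 2 → φ v = v := by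
    intro v hv hvl
    obtain ⟨a, ha1, ha2, hLR⟩ := dias2_cases hv hvl
    rcases hLR with rfl | rfl
    · rw [(hfL a ha1 ha2).1, hfid a ha1 ha2]
    · rw [(hgR a ha1 ha2).1, hgid a ha1 ha2]
  -- main induction on the length
  have main : ∀ n, ∀ w ∈ DiasSet γ, w.length = n → φ w = w := by
    intro n
    induction n using Nat.strong_induction_on with
    | _ n ih =>
      intro w hw hl
      match w, hw, hl with
      | [], hw, hl => simp [DiasSet] at hw
      | [x], hw, hl =>
        have hx : [x] = [0] := dias1_eq hw rfl
        rw [hx]; exact h0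
      | [x, y], hw, hl => exact key2 _ hw rfl
      | w1 :: w2 :: r :: rest, hw, hl =>
        have hcount := hw.1
        have hb := hw.2
        have hw1γ := hb w1 (by simp)
        have hw2γ := hb w2 (by simp)
        have hn3 : n = rest.length + 3 := by simpa using hl.symm
        by_cases hcase : w2 ≠ 0 ∧ w1 ≤ w2
        · -- w = pcomp (w1 :: r :: rest) 1 [0, w2]
          have hu : (w1 :: r :: rest) ∈ DiasSet γ := by
            refine ⟨?_, ?_⟩
            · have h2 : ¬ ((0 : ℕ) = w2) := fun h => hcase.1 h.symm
              have := hcount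
              simp [List.count_cons, h2] at this ⊢
              split_ifs at this ⊢ <;> omega
            · intro l hl'
              apply hb
              simp only [List.mem_cons] at hl' ⊢
              tauto
          have hv : ([0, w2] : List ℕ) ∈ DiasSet γ := L_mem (by omega) hw2γ
          have hdec : pcomp (w1 :: r :: rest) 1 [0, w2] = w1 :: w2 :: r :: rest := by
            simp [pcomp, Nat.max_eq_right hcase.2]
          have ihu := ih (n - 1) (by omega) (w1 :: r :: rest) hu (by simp; omega)
          calc φ (w1 :: w2 :: r :: rest) = φ (pcomp (w1 :: r :: rest) 1 [0, w2]) := by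
                rw [hdec]
            _ = pcomp (φ (w1 :: r :: rest)) 1 (φ [0, w2]) :=
                hcomp _ hu _ hv 1 le_rfl (by simp)
            _ = pcomp (w1 :: r :: rest) 1 [0, w2] := by
                rw [ihu, key2 _ hv rfl]
            _ = w1 :: w2 :: r :: rest := hdec
        · -- here w1 ≠ 0 and w2 ≤ w1
          have hw1 : w1 ≠ 0 := by
            intro h
            subst h
            have h2 : w2 ≠ 0 := by
              intro h'
              subst h'
              simp [List.count_cons] at hcount
            exact hcase ⟨h2, by omega⟩
          have hle : w2 ≤ w1 := by
            by_cases h' : w2 = 0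
            · omega
            · push_neg at hcase
              have := hcase h'
              omega
          have hu : (w2 :: r :: rest) ∈ DiasSet γ := by
            refine ⟨?_, ?_⟩
            · have h1 : ¬ ((0 : ℕ) = w1) := fun h => hw1 h.symm
              have := hcount
              simp [List.count_cons, h1] at this
              simpa [List.count_cons, hw1] using this
            · intro l hl'
              apply hb
              simp only [List.mem_cons] at hl' ⊢
              tauto
          have hv : ([w1, 0] : List ℕ) ∈ DiasSet γ := R_mem (by omega) hw1γ
          have hdec : pcomp (w2 :: r :: rest) 1 [w1, 0] = w1 :: w2 :: r :: rest := by
            simp [pcomp, Nat.max_eq_right hle]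
          have ihu := ih (n - 1) (by omega) (w2 :: r :: rest) hu (by simp; omega)
          calc φ (w1 :: w2 :: r :: rest) = φ (pcomp (w2 :: r :: rest) 1 [w1, 0]) := by
                rw [hdec]
            _ = pcomp (φ (w2 :: r :: rest)) 1 (φ [w1, 0]) :=
                hcomp _ hu _ hv 1 le_rfl (by simp)
            _ = pcomp (w2 :: r :: rest) 1 [w1, 0] := by
                rw [ihu, key2 _ hv rfl]
            _ = w1 :: w2 :: r :: rest := hdec
  intro w hw
  exact main w.length w hw rfl
end

section
/- For every natural number γ ≥ 1, the mirror map ρ sending each word to its reversal restricts to a bijection from Dias_γ(n) to Dias_γ(n) for each n and satisfies ρ(u ∘_i v) = ρ(u) ∘_{n−i+1} ρ(v) for all u ∈ Dias_γ(n), v ∈ Dias_γ(m) and i ∈ {1,…,n} (so ρ is an operad antiautomorphism of Dias_γ); moreover, any family of bijections ψ_n : Dias_γ(n) → Dias_γ(n) satisfying ψ_{n+m−1}(u ∘_i v) = ψ_n(u) ∘_{n−i+1} ψ_m(v) for all such u, v, i coincides with ρ. Hence the group of symmetries of the set-operad Dias_γ has exactly two elements: the identity and the mirror map. -/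
lemma pcomp_reverse' (u v : List ℕ) (i : ℕ) (h1 : 1 ≤ i) (h2 : i ≤ u.length) :
    (pcomp u i v).reverse = pcomp u.reverse (u.length - i + 1) v.reverse := by
  obtain ⟨k, rfl⟩ : ∃ k, i = k + 1 := ⟨i - 1, by omega⟩
  have hk : k < u.length := by omega
  unfold pcomp
  simp only [List.reverse_append, List.reverse_take, List.reverse_drop,
    Nat.add_sub_cancel, List.map_reverse]
  have hget : u.reverse.getD (u.length - (k + 1)) 0 = u.getD k 0 := by
    rw [List.getD_eq_getElem?_getD, List.getD_eq_getElem?_getD,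
      List.getElem?_reverse (by simp; omega)]
    congr 2
    omega
  rw [hget]
  have h2' : u.length - (k + 1) + 1 = u.length - k := by omega
  rw [h2', List.append_assoc]

lemma pcomp_at_zero (s t v : List ℕ) :
    pcomp (s ++ 0 :: t) (s.length + 1) v = s ++ v ++ t := by
  unfold pcomp
  have h1 : (s ++ 0 :: t).take s.length = s := by
    rw [List.take_append_of_le_length (by simp)]; simp
  have h2 : (s ++ 0 :: t).getD s.length 0 = 0 := by
    rw [List.getD_eq_getElem?_getD, List.getElem?_append_right le_rfl]
    simp
  have h3 : (s ++ 0 :: t).drop (s.length + 1) = t := by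
    have ha : s ++ 0 :: t = (s ++ [0]) ++ t := by simp
    rw [ha]
    have hb : s.length + 1 = (s ++ [0]).length := by simp
    rw [hb, List.drop_left]
  simp only [Nat.add_sub_cancel, h1, h2, h3]
  simp

lemma mem_dias (γ : ℕ) (s t : List ℕ) (h0s : (0:ℕ) ∉ s) (h0t : (0:ℕ) ∉ t)
    (hs : ∀ l ∈ s, l ≤ γ) (ht : ∀ l ∈ t, l ≤ γ) : s ++ 0 :: t ∈ DiasSet γ := by
  constructor
  · simp [List.count_append, List.count_cons, List.count_eq_zero.mpr h0s,
      List.count_eq_zero.mpr h0t]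
  · intro l hl
    simp at hl
    rcases hl with h | rfl | h
    · exact hs l h
    · exact Nat.zero_le γ
    · exact ht l h

lemma dias_len1 (γ : ℕ) (w : List ℕ) (hw : w ∈ DiasSet γ) (hl : w.length = 1) :
    w = [0] := by
  match w with
  | [x] =>
    obtain ⟨h1, h2⟩ := hw
    simp [List.count_cons] at h1
    simp [h1]

lemma dias_len2 (γ : ℕ) (w : List ℕ) (hw : w ∈ DiasSet γ) (hl : w.length = 2) :
    ∃ a, 1 ≤ a ∧ a ≤ γ ∧ (w = [0,a] ∨ w = [a,0]) := by
  match w with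
  | [x, y] =>
    obtain ⟨h1, h2⟩ := hw
    simp [List.count_cons] at h1
    have hx := h2 x (by simp)
    have hy := h2 y (by simp)
    rcases eq_or_ne x 0 with rfl | hx0
    · refine ⟨y, ?_, hy, Or.inl ?_⟩ <;> simp_all <;> omega
    · refine ⟨x, ?_, hx, Or.inr ?_⟩ <;> simp_all <;> omega

lemma mem_dias2a (γ a : ℕ) (h1 : 1 ≤ a) (h2 : a ≤ γ) : [0, a] ∈ DiasSet γ := by
  constructor
  · simp [List.count_cons]; omega
  · intro l hl; simp at hl; rcases hl with rfl | rfl <;> omega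

lemma mem_dias2b (γ a : ℕ) (h1 : 1 ≤ a) (h2 : a ≤ γ) : [a, 0] ∈ DiasSet γ := by
  constructor
  · simp [List.count_cons]; omega
  · intro l hl; simp at hl; rcases hl with rfl | rfl <;> omega

lemma psi2 (γ : ℕ) (ψ : List ℕ → List ℕ)
    (hbij : ∀ n : ℕ, Set.BijOn ψ {w | w ∈ DiasSet γ ∧ w.length = n}
      {w | w ∈ DiasSet γ ∧ w.length = n})
    (hanti : ∀ u ∈ DiasSet γ, ∀ v ∈ DiasSet γ, ∀ i : ℕ, 1 ≤ i → i ≤ u.length →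
      ψ (pcomp u i v) = pcomp (ψ u) (u.length - i + 1) (ψ v))
    (a : ℕ) (h1 : 1 ≤ a) (h2 : a ≤ γ) :
    ∃ c, 1 ≤ c ∧ c ≤ γ ∧ ψ [0, a] = [c, 0] ∧ ψ [a, 0] = [0, c] := by
  have hx : [0, a] ∈ DiasSet γ := mem_dias2a γ a h1 h2
  have hy : [a, 0] ∈ DiasSet γ := mem_dias2b γ a h1 h2
  have hxS : ([0, a] : List ℕ) ∈ {w | w ∈ DiasSet γ ∧ w.length = 2} := ⟨hx, rfl⟩
  have hyS : ([a, 0] : List ℕ) ∈ {w | w ∈ DiasSet γ ∧ w.length = 2} := ⟨hy, rfl⟩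
  have hpS := (hbij 2).mapsTo hxS
  have hqS := (hbij 2).mapsTo hyS
  obtain ⟨c, hc1, hc2, hcs⟩ := dias_len2 γ (ψ [0,a]) hpS.1 hpS.2
  obtain ⟨d, hd1, hd2, hds⟩ := dias_len2 γ (ψ [a,0]) hqS.1 hqS.2
  have hne : ψ [0, a] ≠ ψ [a, 0] := by
    intro h
    have := (hbij 2).injOn hxS hyS h
    simp at this
    omega
  have e1 : pcomp (ψ [0,a]) 1 (ψ [a,0]) = pcomp (ψ [0,a]) 2 (ψ [0,a]) := by
    have r1 := hanti [0,a] hx [a,0] hy 2 (by norm_num) (by norm_num)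
    have r2 := hanti [0,a] hx [0,a] hx 1 (by norm_num) (by norm_num)
    have hc : pcomp [0,a] 2 [a,0] = pcomp [0,a] 1 [0,a] := by simp [pcomp]
    rw [hc] at r1
    simp only [List.length_cons, List.length_nil] at r1 r2
    rw [← r1, ← r2]
  have e2 : pcomp (ψ [a,0]) 2 (ψ [0,a]) = pcomp (ψ [a,0]) 1 (ψ [a,0]) := by
    have r1 := hanti [a,0] hy [0,a] hx 1 (by norm_num) (by norm_num)
    have r2 := hanti [a,0] hy [a,0] hy 2 (by norm_num) (by norm_num)
    have hc : pcomp [a,0] 1 [0,a] = pcomp [a,0] 2 [a,0] := by simp [pcomp]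
    rw [hc] at r1
    simp only [List.length_cons, List.length_nil] at r1 r2
    rw [← r1, ← r2]
  rcases hcs with hp | hp <;> rcases hds with hq | hq <;>
      rw [hp, hq] at e1 e2 hne <;> simp [pcomp] at e1 e2 hne
  · omega
  · omega
  · refine ⟨c, hc1, hc2, hp, ?_⟩
    rw [hq]
    have : d = c := by omega
    rw [this]
  · omega

lemma sigma_id (γ : ℕ) (σ : ℕ → ℕ)
    (hmem : ∀ a, 1 ≤ a → a ≤ γ → 1 ≤ σ a ∧ σ a ≤ γ)
    (hmono : ∀ a b, 1 ≤ b → b ≤ a → a ≤ γ → σ b ≤ σ a)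
    (hinj : ∀ a b, 1 ≤ a → a ≤ γ → 1 ≤ b → b ≤ γ → σ a = σ b → a = b) :
    ∀ a, 1 ≤ a → a ≤ γ → σ a = a := by
  have hge : ∀ a, 1 ≤ a → a ≤ γ → a ≤ σ a := by
    intro a
    induction a with
    | zero => omega
    | succ n ih =>
      intro _ hn
      rcases Nat.eq_zero_or_pos n with rfl | hpos
      · exact (hmem 1 le_rfl hn).1
      · have h1 := ih (by omega) (by omega)
        have h2 := hmono (n+1) n (by omega) (by omega) hn
        have h3 : σ n ≠ σ (n+1) := fun h => by
          have := hinj n (n+1) (by omega) (by omega) (by omega) hn h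
          omega
        omega
  have key : ∀ d a, 1 ≤ a → a ≤ γ → γ - a ≤ d → σ a = a := by
    intro d
    induction d with
    | zero =>
      intro a h1 h2 h3
      have := hge a h1 h2
      have := (hmem a h1 h2).2
      omega
    | succ n ih =>
      intro a h1 h2 h3
      have h4 := hge a h1 h2
      have h5 := (hmem a h1 h2).2
      rcases Nat.lt_or_ge a (σ a) with hlt | hge'
      · have hx := ih (σ a) (by omega) (by omega) (by omega)
        have := hinj a (σ a) h1 h2 (by omega) (by omega) hx.symm
        omega
      · omega
  intro a h1 h2
  exact key γ a h1 h2 (by omega)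

/-- The mirror map is an operad antiautomorphism of `Dias_γ`, and it is the
only one: any family of arity-preserving bijections anticommuting with the
partial compositions coincides with the mirror map. -/
theorem stmt7 (γ : ℕ) (hγ : 1 ≤ γ) :
    (∀ n : ℕ, Set.BijOn List.reverse {w | w ∈ DiasSet γ ∧ w.length = n}
      {w | w ∈ DiasSet γ ∧ w.length = n}) ∧
    (∀ u ∈ DiasSet γ, ∀ v ∈ DiasSet γ, ∀ i : ℕ, 1 ≤ i → i ≤ u.length →
      (pcomp u i v).reverse = pcomp u.reverse (u.length - i + 1) v.reverse) ∧
    (∀ ψ : List ℕ → List ℕ,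
      (∀ n : ℕ, Set.BijOn ψ {w | w ∈ DiasSet γ ∧ w.length = n}
        {w | w ∈ DiasSet γ ∧ w.length = n}) →
      (∀ u ∈ DiasSet γ, ∀ v ∈ DiasSet γ, ∀ i : ℕ, 1 ≤ i → i ≤ u.length →
        ψ (pcomp u i v) = pcomp (ψ u) (u.length - i + 1) (ψ v)) →
      ∀ w ∈ DiasSet γ, ψ w = w.reverse) := by
  have hmaps : ∀ n : ℕ, Set.MapsTo List.reverse {w | w ∈ DiasSet γ ∧ w.length = n}
      {w | w ∈ DiasSet γ ∧ w.length = n} := by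
    intro n w hw
    obtain ⟨⟨hc, hb⟩, hl⟩ := hw
    refine ⟨⟨?_, ?_⟩, by simpa⟩
    · rwa [List.count_reverse]
    · intro l hl'
      exact hb l (List.mem_reverse.mp hl')
  refine ⟨?_, fun u _ v _ i h1 h2 => pcomp_reverse' u v i h1 h2, ?_⟩
  · intro n
    refine ⟨hmaps n, fun x _ y _ h => List.reverse_injective h, ?_⟩
    intro w hw
    exact ⟨w.reverse, hmaps n hw, List.reverse_reverse w⟩
  intro ψ hbij hanti
  -- the permutation of letters induced by ψ on words of length 2
  have hpsi2 : ∀ a, ∃ c, 1 ≤ a → a ≤ γ →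
      1 ≤ c ∧ c ≤ γ ∧ ψ [0, a] = [c, 0] ∧ ψ [a, 0] = [0, c] := by
    intro a
    by_cases h : 1 ≤ a ∧ a ≤ γ
    · obtain ⟨c, hc1, hc2, hc3, hc4⟩ := psi2 γ ψ hbij hanti a h.1 h.2
      exact ⟨c, fun _ _ => ⟨hc1, hc2, hc3, hc4⟩⟩
    · exact ⟨0, fun ha hb => absurd ⟨ha, hb⟩ h⟩
  choose σ hσ using hpsi2
  have hmono : ∀ a b, 1 ≤ b → b ≤ a → a ≤ γ → σ b ≤ σ a := by
    intro a b hb hba ha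
    obtain ⟨ha1, ha2, ha3, ha4⟩ := hσ a (by omega) ha
    obtain ⟨hb1, hb2, hb3, hb4⟩ := hσ b hb (by omega)
    have hxa := mem_dias2a γ a (by omega) ha
    have hxb := mem_dias2a γ b hb (by omega)
    have r1 := hanti [0,a] hxa [0,b] hxb 2 (by norm_num) (by norm_num)
    have r2 := hanti [0,a] hxa [0,a] hxa 2 (by norm_num) (by norm_num)
    have hc : pcomp [0,a] 2 [0,b] = pcomp [0,a] 2 [0,a] := by
      simp [pcomp]; omega
    rw [hc, r2] at r1
    simp only [List.length_cons, List.length_nil] at r1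
    rw [ha3, hb3] at r1
    simp [pcomp] at r1
    omega
  have hinj : ∀ a b, 1 ≤ a → a ≤ γ → 1 ≤ b → b ≤ γ → σ a = σ b → a = b := by
    intro a b ha1 ha2 hb1 hb2 h
    obtain ⟨_, _, ha3, _⟩ := hσ a ha1 ha2
    obtain ⟨_, _, hb3, _⟩ := hσ b hb1 hb2
    have hψ : ψ [0, a] = ψ [0, b] := by rw [ha3, hb3, h]
    have := (hbij 2).injOn ⟨mem_dias2a γ a ha1 ha2, rfl⟩
      ⟨mem_dias2a γ b hb1 hb2, rfl⟩ hψ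
    simpa using this
  have hid := sigma_id γ σ (fun a h1 h2 => ⟨(hσ a h1 h2).1, (hσ a h1 h2).2.1⟩)
    hmono hinj
  have base1 : ψ [0] = [0] := by
    have h0 : ([0] : List ℕ) ∈ DiasSet γ := ⟨by simp, by simp⟩
    have := (hbij 1).mapsTo ⟨h0, rfl⟩
    exact dias_len1 γ _ this.1 this.2
  have base2a : ∀ a, 1 ≤ a → a ≤ γ → ψ [0, a] = [a, 0] := by
    intro a h1 h2
    rw [(hσ a h1 h2).2.2.1, hid a h1 h2]
  have base2b : ∀ a, 1 ≤ a → a ≤ γ → ψ [a, 0] = [0, a] := by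
    intro a h1 h2
    rw [(hσ a h1 h2).2.2.2, hid a h1 h2]
  have main : ∀ N, ∀ w ∈ DiasSet γ, w.length ≤ N → ψ w = w.reverse := by
    intro N
    induction N with
    | zero =>
      intro w hw hl
      have hw1 := hw.1
      have : w = [] := List.eq_nil_of_length_eq_zero (by omega)
      subst this
      simp at hw1
    | succ N ih =>
      intro w hw hl
      have h0w : (0:ℕ) ∈ w := by
        by_contra h
        have hw1 := hw.1
        rw [List.count_eq_zero.mpr h] at hw1
        exact absurd hw1 (by norm_num)
      obtain ⟨s, t, rfl⟩ := List.mem_iff_append.mp h0w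
      have hcount := hw.1
      rw [List.count_append, List.count_cons] at hcount
      simp at hcount
      have h0s : (0:ℕ) ∉ s := List.count_eq_zero.mp (by omega)
      have h0t : (0:ℕ) ∉ t := List.count_eq_zero.mp (by omega)
      have hγs : ∀ l ∈ s, l ≤ γ := fun l hl' => hw.2 l (by simp [hl'])
      have hγt : ∀ l ∈ t, l ≤ γ := fun l hl' => hw.2 l (by simp [hl'])
      rcases t with _ | ⟨b, t'⟩
      · rcases List.eq_nil_or_concat s with rfl | ⟨s', b, rfl⟩
        · simpa using base1
        · simp only [List.concat_eq_append] at *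
          have hb0 : b ≠ 0 := by
            intro h; exact h0s (by simp [h])
          have hbγ : b ≤ γ := hγs b (by simp)
          rcases List.eq_nil_or_concat s' with rfl | hne
          · simpa using base2b b (by omega) hbγ
          · have hs'ne : s' ≠ [] := by
              obtain ⟨l', a', rfl⟩ := hne; simp
            have h0s' : (0:ℕ) ∉ s' := fun h => h0s (by simp [h])
            have hγs' : ∀ l ∈ s', l ≤ γ := fun l hl' => hγs l (by simp [hl'])
            have hu : s' ++ 0 :: ([] : List ℕ) ∈ DiasSet γ :=
              mem_dias γ s' [] h0s' (by simp) hγs' (by simp)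
            have hv : [b, 0] ∈ DiasSet γ := mem_dias2b γ b (by omega) hbγ
            have hcomp : pcomp (s' ++ 0 :: ([] : List ℕ)) (s'.length + 1) [b, 0]
                = (s' ++ [b]) ++ 0 :: ([] : List ℕ) := by
              rw [pcomp_at_zero]; simp
            have hslen : 1 ≤ s'.length := by
              cases s' with
              | nil => exact absurd rfl hs'ne
              | cons _ _ => simp
            have hwl : ((s' ++ [b]) ++ 0 :: ([] : List ℕ)).length = s'.length + 2 := by
              simp
            have hul : (s' ++ 0 :: ([] : List ℕ)).length ≤ N := by simp at hl ⊢; omega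
            have hvl : ([b, 0] : List ℕ).length ≤ N := by simp at hl ⊢; omega
            have hi2 : s'.length + 1 ≤ (s' ++ 0 :: ([] : List ℕ)).length := by simp
            calc ψ ((s' ++ [b]) ++ 0 :: ([] : List ℕ))
                = ψ (pcomp (s' ++ 0 :: ([] : List ℕ)) (s'.length + 1) [b, 0]) := by
                  rw [hcomp]
              _ = pcomp (ψ (s' ++ 0 :: ([] : List ℕ)))
                    ((s' ++ 0 :: ([] : List ℕ)).length - (s'.length + 1) + 1)
                    (ψ [b, 0]) := hanti _ hu _ hv _ (by omega) hi2
              _ = pcomp (s' ++ 0 :: ([] : List ℕ)).reverse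
                    ((s' ++ 0 :: ([] : List ℕ)).length - (s'.length + 1) + 1)
                    ([b, 0] : List ℕ).reverse := by rw [ih _ hu hul, ih _ hv hvl]
              _ = (pcomp (s' ++ 0 :: ([] : List ℕ)) (s'.length + 1) [b, 0]).reverse :=
                  (pcomp_reverse' _ _ _ (by omega) hi2).symm
              _ = ((s' ++ [b]) ++ 0 :: ([] : List ℕ)).reverse := by rw [hcomp]
      · have hb0 : b ≠ 0 := fun h => h0t (by simp [h])
        have hbγ : b ≤ γ := hγt b (by simp)
        have h0t' : (0:ℕ) ∉ t' := fun h => h0t (by simp [h])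
        have hγt' : ∀ l ∈ t', l ≤ γ := fun l hl' => hγt l (by simp [hl'])
        by_cases hst : s = [] ∧ t' = []
        · obtain ⟨rfl, rfl⟩ := hst
          simpa using base2a b (by omega) hbγ
        · have hlen1 : 1 ≤ s.length + t'.length := by
            by_contra h
            push_neg at h
            exact hst ⟨List.eq_nil_of_length_eq_zero (by omega),
              List.eq_nil_of_length_eq_zero (by omega)⟩
          have hu : s ++ 0 :: t' ∈ DiasSet γ := mem_dias γ s t' h0s h0t' hγs hγt'
          have hv : [0, b] ∈ DiasSet γ := mem_dias2a γ b (by omega) hbγ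
          have hcomp : pcomp (s ++ 0 :: t') (s.length + 1) [0, b] = s ++ 0 :: b :: t' := by
            rw [pcomp_at_zero]; simp
          have hul : (s ++ 0 :: t').length ≤ N := by simp at hl ⊢; omega
          have hvl : ([0, b] : List ℕ).length ≤ N := by simp at hl ⊢; omega
          have hi2 : s.length + 1 ≤ (s ++ 0 :: t').length := by simp
          calc ψ (s ++ 0 :: b :: t')
              = ψ (pcomp (s ++ 0 :: t') (s.length + 1) [0, b]) := by rw [hcomp]
            _ = pcomp (ψ (s ++ 0 :: t'))
                  ((s ++ 0 :: t').length - (s.length + 1) + 1) (ψ [0, b]) :=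
                hanti _ hu _ hv _ (by omega) hi2
            _ = pcomp (s ++ 0 :: t').reverse
                  ((s ++ 0 :: t').length - (s.length + 1) + 1)
                  ([0, b] : List ℕ).reverse := by rw [ih _ hu hul, ih _ hv hvl]
            _ = (pcomp (s ++ 0 :: t') (s.length + 1) [0, b]).reverse :=
                (pcomp_reverse' _ _ _ (by omega) hi2).symm
            _ = (s ++ 0 :: b :: t').reverse := by rw [hcomp]
  intro w hw
  exact main w.length w hw le_rfl
end

section
/- For every natural number γ, every n ≥ 1 and all words y_1, …, y_n ∈ Dias_γ, the full composition map sending x ∈ Dias_γ(n) to x ∘ (y_1, …, y_n) is injective; that is, if x, x' ∈ Dias_γ(n) satisfy x ∘ (y_1,…,y_n) = x' ∘ (y_1,…,y_n), then x = x'. (Dias_γ is a basic set-operad.) -/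
/-- The full composition `x ∘ (y_1, …, y_n)`: the concatenation, for
`i = 1, …, n`, of the word obtained from `y_i` by replacing each of its
letters `b` by `max x_i b`. -/
def fullcomp (x : List ℕ) (ys : List (List ℕ)) : List ℕ :=
  (List.zipWith (fun a y => y.map (fun b => max a b)) x ys).flatten

/-- `Dias_γ` is a basic set-operad: full composition maps are injective. -/
theorem stmt8 (γ : ℕ) (ys : List (List ℕ)) (hys : ∀ y ∈ ys, y ∈ DiasSet γ)
    (x x' : List ℕ) (hx : x ∈ DiasSet γ) (hx' : x' ∈ DiasSet γ)
    (hlen : x.length = ys.length) (hlen' : x'.length = ys.length)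
    (h : fullcomp x ys = fullcomp x' ys) : x = x' := by
  clear hx hx'
  induction ys generalizing x x' with
  | nil =>
    simp only [List.length_nil, List.length_eq_zero_iff] at hlen hlen'
    rw [hlen, hlen']
  | cons y t ih =>
    cases x with
    | nil => simp at hlen
    | cons a xs =>
      cases x' with
      | nil => simp at hlen'
      | cons a' xs' =>
        simp only [fullcomp, List.zipWith_cons_cons, List.flatten_cons] at h
        obtain ⟨h1, h2⟩ := List.append_inj h (by simp)
        have hy : (0 : ℕ) ∈ y := by
          have := (hys y (by simp)).1
          exact List.count_pos_iff.mp (by omega)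
        have ha : a = a' := by
          have := (List.map_eq_map_iff.mp h1) 0 hy
          simpa using this
        have hxs : xs = xs' := by
          apply ih (fun z hz => hys z (by simp [hz]))
          · simpa using hlen
          · simpa using hlen'
          · exact h2
        rw [ha, hxs]
end

section
/- Fix a natural number γ and let x and y be words of Dias_γ of lengths at least 2, and i ∈ {1,…,|x|}. In the vector space with basis Dias_γ, with the partial compositions extended bilinearly, the elements K_x satisfy: K_x ∘_i K_y = K_{x ∘_i y} if min(y) > x_i; K_x ∘_i K_y = Σ_{a = x_i}^{γ} K_{x ∘_{a,i} y} if min(y) = x_i; and K_x ∘_i K_y = 0 if min(y) < x_i. -/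
/-- The Hamming distance between two words of the same length. -/
def ham (x y : List ℕ) : ℕ :=
  (List.zipWith (fun a b => if a = b then 0 else 1) x y).sum

/-- The list of all words of `Incr_γ(x)`: words obtained from `x` by
incrementing by one the letters of an arbitrary set of positions whose letters
lie in `{1, …, γ−1}`. -/
def incrList (γ : ℕ) : List ℕ → List (List ℕ)
  | [] => [[]]
  | a :: w =>
      (incrList γ w).flatMap fun w' =>
        if 1 ≤ a ∧ a + 1 ≤ γ then [a :: w', (a + 1) :: w'] else [a :: w']

/-- The element `K_x` of the vector space with basis the words. -/
noncomputable def Kelt (K : Type) [Field K] (γ : ℕ) (x : List ℕ) :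
    List ℕ →₀ K :=
  ∑ x' ∈ (incrList γ x).toFinset,
    ((-1 : K) ^ ham x x') • Finsupp.single x' (1 : K)

/-- The bilinear extension of the partial composition `∘_i`. -/
noncomputable def compExt (K : Type) [Field K] (f : List ℕ →₀ K) (i : ℕ)
    (g : List ℕ →₀ K) : List ℕ →₀ K :=
  f.sum fun u cu => g.sum fun v cv =>
    (cu * cv) • Finsupp.single (pcomp u i v) (1 : K)

/-- The smallest letter of `y` among its letters different from `0`. -/
def minNZ (γ : ℕ) (y : List ℕ) : ℕ := (y.filter (fun b => b ≠ 0)).foldr min γ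

/-- `x ∘_{a,i} y`: the word `x ∘_i y` in which the letter coming from the
unique `0` of `y` is replaced by `a` instead of `x_i`. -/
def pcompA (x : List ℕ) (i : ℕ) (y : List ℕ) (a : ℕ) : List ℕ :=
  (pcomp x i y).set ((i - 1) + y.idxOf 0) a

/-! ### Auxiliary machinery -/

def opts (γ a : ℕ) : List ℕ := if 1 ≤ a ∧ a + 1 ≤ γ then [a, a + 1] else [a]

lemma incrList_cons (γ a : ℕ) (w : List ℕ) :
    incrList γ (a :: w) = (incrList γ w).flatMap fun w' => (opts γ a).map (· :: w') := by
  show ((incrList γ w).flatMap fun w' =>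
      if 1 ≤ a ∧ a + 1 ≤ γ then [a :: w', (a + 1) :: w'] else [a :: w']) = _
  by_cases h : 1 ≤ a ∧ a + 1 ≤ γ
  · simp [h, opts]
  · simp only [opts, if_neg h, List.map_cons, List.map_nil]

def incrM (γ : ℕ) (w : List ℕ) : Multiset (List ℕ) := (incrList γ w : Multiset (List ℕ))

lemma incrM_nil (γ : ℕ) : incrM γ [] = {[]} := rfl

lemma incrM_cons (γ a : ℕ) (w : List ℕ) :
    incrM γ (a :: w) = (incrM γ w).bind fun w' => ((opts γ a).map (· :: w') : Multiset (List ℕ)) := by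
  unfold incrM
  rw [incrList_cons, ← Multiset.coe_bind]

lemma incrM_append (γ : ℕ) (u v : List ℕ) :
    incrM γ (u ++ v) = (incrM γ u).bind fun u' => (incrM γ v).map (u' ++ ·) := by
  induction u with
  | nil => simp [incrM_nil]
  | cons a u ih =>
      rw [List.cons_append, incrM_cons, ih, incrM_cons, Multiset.bind_assoc,
        Multiset.bind_assoc]
      congr 1; funext u'
      rw [Multiset.bind_map]
      rw [show ((List.map (fun x => x :: u') (opts γ a) : List _) : Multiset _)
            = Multiset.map (fun x => x :: u') ↑(opts γ a) from (Multiset.map_coe _ _).symm,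
        Multiset.bind_map]
      simp only [← Multiset.map_coe]
      rw [Multiset.bind_map_comm]
      rfl

lemma ham_cons (a b : ℕ) (u v : List ℕ) :
    ham (a :: u) (b :: v) = (if a = b then 0 else 1) + ham u v := by
  simp [ham]

lemma ham_append (u u' v v' : List ℕ) (h : u.length = u'.length) :
    ham (u ++ v) (u' ++ v') = ham u u' + ham v v' := by
  unfold ham
  rw [List.zipWith_append h, List.sum_append]

lemma mem_incrM_length (γ : ℕ) : ∀ (w w' : List ℕ), w' ∈ incrM γ w → w'.length = w.length := by
  intro w
  induction w with
  | nil => intro w' h; simp [incrM_nil] at h; simp [h]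
  | cons a w ih =>
      intro w' h
      rw [incrM_cons] at h
      simp only [Multiset.mem_bind, Multiset.mem_coe, List.mem_map] at h
      obtain ⟨t, ht, c, hc, rfl⟩ := h
      simp [ih t ht]

section KS
variable (K : Type) [Field K] (γ : ℕ)

/-- The ambient noncommutative algebra: span of words. -/
abbrev AW : Type := MonoidAlgebra K (FreeMonoid ℕ)

noncomputable def sgl (w : List ℕ) : AW K := MonoidAlgebra.single (FreeMonoid.ofList w) (1 : K)

lemma sgl_mul (u v : List ℕ) : sgl K u * sgl K v = sgl K (u ++ v) := by
  show MonoidAlgebra.single (FreeMonoid.ofList u) (1:K) * MonoidAlgebra.single (FreeMonoid.ofList v) 1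
      = MonoidAlgebra.single (FreeMonoid.ofList (u ++ v)) 1
  rw [MonoidAlgebra.single_mul_single, FreeMonoid.ofList_append]
  simp

lemma sgl_nil : sgl K [] = 1 := by rw [MonoidAlgebra.one_def]; rfl

/-- Signed sum over all increments of `w` of `f`. -/
noncomputable def KS (f : List ℕ → AW K) (w : List ℕ) : AW K :=
  ((incrM γ w).map fun w' => ((-1 : K) ^ ham w w') • f w').sum

lemma KS_congr (f g : List ℕ → AW K) (w : List ℕ)
    (h : ∀ w' ∈ incrM γ w, f w' = g w') : KS K γ f w = KS K γ g w := by
  unfold KS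
  congr 1
  exact Multiset.map_congr rfl fun w' hw' => by rw [h w' hw']

lemma KS_nil (f : List ℕ → AW K) : KS K γ f [] = f [] := by
  simp [KS, incrM_nil, ham]

lemma KS_mul_left (f : List ℕ → AW K) (P : AW K) (w : List ℕ) :
    KS K γ (fun w' => P * f w') w = P * KS K γ f w := by
  unfold KS
  rw [← Multiset.sum_map_mul_left]
  congr 1
  exact Multiset.map_congr rfl fun w' _ => (mul_smul_comm _ _ _).symm

lemma KS_mul_right (f : List ℕ → AW K) (P : AW K) (w : List ℕ) :
    KS K γ (fun w' => f w' * P) w = KS K γ f w * P := by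
  unfold KS
  rw [← Multiset.sum_map_mul_right]
  congr 1
  exact Multiset.map_congr rfl fun w' _ => (smul_mul_assoc _ _ _).symm

lemma KS_append (f : List ℕ → AW K) (u v : List ℕ) :
    KS K γ f (u ++ v) = KS K γ (fun u' => KS K γ (fun v' => f (u' ++ v')) v) u := by
  unfold KS
  rw [incrM_append, Multiset.map_bind, Multiset.sum_bind]
  congr 1
  refine Multiset.map_congr rfl fun u' hu' => ?_
  rw [Multiset.map_map, Multiset.smul_sum, Multiset.map_map]
  congr 1
  refine Multiset.map_congr rfl fun v' hv' => ?_
  simp only [Function.comp]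
  rw [ham_append u u' v v' (mem_incrM_length γ u u' hu').symm, pow_add, mul_smul]

lemma KS_cons (f : List ℕ → AW K) (a : ℕ) (w : List ℕ) :
    KS K γ f (a :: w) =
      KS K γ (fun w' =>
        ((opts γ a).map fun c => ((-1 : K) ^ (if a = c then 0 else 1)) • f (c :: w')).sum) w := by
  unfold KS
  rw [incrM_cons, Multiset.map_bind, Multiset.sum_bind]
  congr 1
  refine Multiset.map_congr rfl fun w' hw' => ?_
  rw [Multiset.map_coe, Multiset.sum_coe, List.map_map, List.smul_sum, List.map_map]
  refine congrArg List.sum (List.map_congr_left fun c hc => ?_)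
  simp only [Function.comp]
  rw [ham_cons, pow_add, mul_comm ((-1:K) ^ _), mul_smul]

end KS

section Kphi
variable (K : Type) [Field K] (γ : ℕ)

/-- Signed sum of increments, with letters transformed by `φ`. -/
noncomputable def Kphi (φ : ℕ → ℕ) (w : List ℕ) : AW K :=
  KS K γ (fun w' => sgl K (w'.map φ)) w

/-- Signed sum of increments (the multiset form of `Kelt`). -/
noncomputable def Kl (w : List ℕ) : AW K := KS K γ (sgl K) w

lemma Kphi_id (w : List ℕ) : Kphi K γ id w = Kl K γ w := by
  unfold Kphi Kl
  simp [List.map_id]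

/-- The head factor. -/
noncomputable def hF (φ : ℕ → ℕ) (a : ℕ) : AW K :=
  if 1 ≤ a ∧ a + 1 ≤ γ then sgl K [φ a] - sgl K [φ (a + 1)] else sgl K [φ a]

lemma Kphi_nil (φ : ℕ → ℕ) : Kphi K γ φ [] = 1 := by
  unfold Kphi
  rw [KS_nil]
  simp [sgl_nil]

lemma Kphi_cons (φ : ℕ → ℕ) (a : ℕ) (w : List ℕ) :
    Kphi K γ φ (a :: w) = hF K γ φ a * Kphi K γ φ w := by
  unfold Kphi
  rw [KS_cons, ← KS_mul_left]
  refine KS_congr K γ _ _ w fun w' _ => ?_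
  show ((opts γ a).map fun c =>
      ((-1 : K) ^ (if a = c then 0 else 1)) • sgl K (φ c :: w'.map φ)).sum = _
  have hs : ∀ c, sgl K (φ c :: w'.map φ) = sgl K [φ c] * sgl K (w'.map φ) := fun c =>
    (sgl_mul K [φ c] (w'.map φ)).symm
  unfold opts hF
  by_cases h : 1 ≤ a ∧ a + 1 ≤ γ
  · simp only [if_pos h, List.map_cons, List.map_nil, List.sum_cons, List.sum_nil, hs]
    have hne : ¬(a = a + 1) := by omega
    simp [hne, sub_eq_add_neg, add_mul, neg_mul]
  · simp only [if_neg h, List.map_cons, List.map_nil, List.sum_cons, List.sum_nil, hs]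
    simp

lemma Kphi_append (φ : ℕ → ℕ) (u v : List ℕ) :
    Kphi K γ φ (u ++ v) = Kphi K γ φ u * Kphi K γ φ v := by
  induction u with
  | nil => simp [Kphi_nil]
  | cons a u ih => rw [List.cons_append, Kphi_cons, Kphi_cons, ih, mul_assoc]

lemma hF_id_of_le (c a : ℕ) (h : c ≤ a) : hF K γ (max c) a = hF K γ id a := by
  unfold hF
  have h1 : max c a = a := by omega
  have h2 : max c (a + 1) = a + 1 := by omega
  simp [h1, h2]

lemma Kphi_max_of_le (c : ℕ) (w : List ℕ) (h : ∀ a ∈ w, c ≤ a) :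
    Kphi K γ (max c) w = Kl K γ w := by
  rw [← Kphi_id]
  induction w with
  | nil => simp [Kphi_nil]
  | cons a w ih =>
      rw [Kphi_cons, Kphi_cons, hF_id_of_le K γ c a (h a (by simp)),
        ih fun b hb => h b (by simp [hb])]

lemma hF_collapse (c a : ℕ) (h1 : 1 ≤ a) (h2 : a < c) (h3 : c ≤ γ) :
    hF K γ (max c) a = 0 := by
  unfold hF
  have hcond : 1 ≤ a ∧ a + 1 ≤ γ := ⟨h1, by omega⟩
  have e1 : max c a = c := by omega
  have e2 : max c (a + 1) = c := by omega
  simp [hcond, e1, e2]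

lemma Kphi_collapse (c a : ℕ) (w : List ℕ) (ha : a ∈ w)
    (h1 : 1 ≤ a) (h2 : a < c) (h3 : c ≤ γ) : Kphi K γ (max c) w = 0 := by
  obtain ⟨s, t, rfl⟩ := List.append_of_mem ha
  rw [Kphi_append, Kphi_cons, hF_collapse K γ c a h1 h2 h3, zero_mul, mul_zero]

lemma Kl_single (a : ℕ) :
    Kl K γ [a] = if 1 ≤ a ∧ a + 1 ≤ γ then sgl K [a] - sgl K [a + 1] else sgl K [a] := by
  rw [← Kphi_id, Kphi_cons, Kphi_nil, mul_one]
  unfold hF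
  simp

/-- Telescoping sum. -/
lemma Kl_telescope (b : ℕ) (hb1 : 1 ≤ b) (hb2 : b ≤ γ) :
    ∑ a ∈ Finset.Icc b γ, Kl K γ [a] = sgl K [b] := by
  obtain ⟨n, hn⟩ : ∃ n, γ - b = n := ⟨γ - b, rfl⟩
  induction n generalizing b with
  | zero =>
      have : b = γ := by omega
      subst this
      simp only [Finset.Icc_self, Finset.sum_singleton, Kl_single]
      have : ¬(1 ≤ b ∧ b + 1 ≤ b) := by omega
      simp [this]
  | succ n ih =>
      have hlt : b < γ := by omega
      rw [Finset.Icc_eq_cons_Ioc hb2, Finset.sum_cons, ← Finset.Icc_add_one_left_eq_Ioc,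
        ih (b + 1) (by omega) (by omega) (by omega), Kl_single]
      have : 1 ≤ b ∧ b + 1 ≤ γ := ⟨hb1, by omega⟩
      simp [this]

end Kphi

section Aux2
variable (K : Type) [Field K] (γ : ℕ)

lemma foldr_min_le (l : List ℕ) (a : ℕ) (ha : a ∈ l) : l.foldr min γ ≤ a := by
  induction l with
  | nil => simp at ha
  | cons b l ih =>
      rcases List.mem_cons.1 ha with rfl | h
      · exact min_le_left _ _
      · exact le_trans (min_le_right _ _) (ih h)

lemma foldr_min_mem (l : List ℕ) : l.foldr min γ = γ ∨ l.foldr min γ ∈ l := by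
  induction l with
  | nil => left; rfl
  | cons b l ih =>
      rcases le_total b (l.foldr min γ) with h | h
      · right; simp [min_eq_left h]
      · rw [List.foldr_cons, min_eq_right h]
        rcases ih with h' | h'
        · left; exact h'
        · right; exact List.mem_cons_of_mem _ h'

lemma le_foldr_min (l : List ℕ) (c : ℕ) (h : ∀ a ∈ l, c ≤ a) (hγ : c ≤ γ) :
    c ≤ l.foldr min γ := by
  induction l with
  | nil => exact hγ
  | cons b l ih =>
      exact le_min (h b (by simp)) (ih fun a ha => h a (by simp [ha]))

lemma minNZ_le (y : List ℕ) (a : ℕ) (ha : a ∈ y) (ha0 : a ≠ 0) : minNZ γ y ≤ a :=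
  foldr_min_le γ _ a (List.mem_filter.2 ⟨ha, by simpa using ha0⟩)

lemma minNZ_mem (y : List ℕ) (h : minNZ γ y < γ) : minNZ γ y ∈ y ∧ minNZ γ y ≠ 0 := by
  rcases foldr_min_mem γ (y.filter (fun b => b ≠ 0)) with h' | h'
  · exact absurd h' (by unfold minNZ at h; omega)
  · have := List.mem_filter.1 h'
    exact ⟨this.1, by simpa [minNZ] using this.2⟩

lemma nodup_incrList (w : List ℕ) : (incrList γ w).Nodup := by
  induction w with
  | nil => simp [incrList]
  | cons a w ih =>
      rw [incrList_cons, List.nodup_flatMap]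
      constructor
      · intro w' _
        refine List.Nodup.map (fun c c' h => by simpa using h) ?_
        unfold opts
        split <;> simp
      · refine ih.imp ?_
        intro w1 w2 hne z hz1 hz2
        simp only [List.mem_map] at hz1 hz2
        obtain ⟨c1, _, rfl⟩ := hz1
        obtain ⟨c2, _, h⟩ := hz2
        exact hne (by injection h with h1 h2; exact h2.symm ▸ rfl)

end Aux2

section Bridge
variable (K : Type) [Field K] (γ : ℕ)

lemma KS_list (f : List ℕ → AW K) (w : List ℕ) :
    KS K γ f w = ((incrList γ w).map fun w' => ((-1 : K) ^ ham w w') • f w').sum := by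
  unfold KS incrM
  rw [Multiset.map_coe, Multiset.sum_coe]

lemma coeff_listsum (l : List (List ℕ)) (f : List ℕ → AW K) :
    ((l.map f).sum).coeff = (l.map fun w => (f w).coeff).sum := by
  induction l <;> simp [*, MonoidAlgebra.coeff_add]

lemma Kelt_eq_Kl (w : List ℕ) : Kelt K γ w = (Kl K γ w).coeff := by
  unfold Kelt Kl
  rw [KS_list, List.sum_toFinset _ (nodup_incrList γ w), coeff_listsum]
  rfl

lemma finsupp_sum_listsum (l' : List (List ℕ)) (d : List ℕ → K) (S : List ℕ → AW K) :
    (((l'.map fun v => d v • Finsupp.single v (1:K)).sum : List ℕ →₀ K).sum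
        fun v cv => cv • S v)
      = (l'.map fun v => d v • S v).sum := by
  induction l' with
  | nil => simp
  | cons v l ih =>
      simp only [List.map_cons, List.sum_cons]
      rw [Finsupp.sum_add_index' (fun a => by simp) (fun a b₁ b₂ => add_smul b₁ b₂ (S a)), ih,
        Finsupp.smul_single, smul_eq_mul, mul_one,
        Finsupp.sum_single_index (by simp)]

lemma compExt_add_left (F₁ F₂ G : List ℕ →₀ K) (i : ℕ) :
    compExt K (F₁ + F₂) i G = compExt K F₁ i G + compExt K F₂ i G := by
  unfold compExt
  exact Finsupp.sum_add_index' (fun a => by simp)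
    (fun a b₁ b₂ => by
      rw [← Finsupp.sum_add]
      congr 1; funext v cv
      rw [add_mul, add_smul])

lemma compExt_single (u : List ℕ) (c : K) (G : List ℕ →₀ K) (i : ℕ) :
    compExt K (Finsupp.single u c) i G
      = (c • (G.sum fun v cv => cv • sgl K (pcomp u i v))).coeff := by
  unfold compExt
  rw [Finsupp.sum_single_index (by simp), Finsupp.smul_sum, MonoidAlgebra.coeff_finsuppSum]
  congr 1; funext v cv
  rw [smul_smul]
  rfl

lemma compExt_listsum (l l' : List (List ℕ)) (c d : List ℕ → K) (i : ℕ) :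
    compExt K ((l.map fun u => c u • Finsupp.single u (1:K)).sum) i
      ((l'.map fun v => d v • Finsupp.single v (1:K)).sum)
    = ((l.map fun u => c u • (l'.map fun v => d v • sgl K (pcomp u i v)).sum).sum).coeff := by
  induction l with
  | nil =>
      simp only [List.map_nil, List.sum_nil]
      unfold compExt
      simp
      rfl
  | cons u l ih =>
      simp only [List.map_cons, List.sum_cons]
      rw [compExt_add_left, ih, Finsupp.smul_single, smul_eq_mul, mul_one, compExt_single,
        finsupp_sum_listsum]
      exact (MonoidAlgebra.coeff_add _ _).symm

lemma compExt_expand (x y : List ℕ) (i : ℕ) :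
    compExt K (Kelt K γ x) i (Kelt K γ y)
      = (KS K γ (fun x' => KS K γ (fun y' => sgl K (pcomp x' i y')) y) x).coeff := by
  have hx : Kelt K γ x
      = ((incrList γ x).map fun u => ((-1:K) ^ ham x u) • Finsupp.single u (1:K)).sum := by
    unfold Kelt; rw [List.sum_toFinset _ (nodup_incrList γ x)]
  have hy : Kelt K γ y
      = ((incrList γ y).map fun v => ((-1:K) ^ ham y v) • Finsupp.single v (1:K)).sum := by
    unfold Kelt; rw [List.sum_toFinset _ (nodup_incrList γ y)]
  rw [hx, hy, compExt_listsum]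
  simp only [KS_list]
  rfl

end Bridge

section Main
variable (K : Type) [Field K] (γ : ℕ)

lemma getD_append_cons (p' : List ℕ) (c : ℕ) (s' : List ℕ) :
    (p' ++ c :: s').getD p'.length 0 = c := by
  induction p' with
  | nil => rfl
  | cons a p ih => simpa using ih

lemma drop_append_cons (p' : List ℕ) (c : ℕ) (s' : List ℕ) :
    (p' ++ c :: s').drop (p'.length + 1) = s' := by
  rw [show p' ++ c :: s' = (p' ++ [c]) ++ s' by simp, List.drop_left' (by simp)]

lemma pcomp_eq (p' : List ℕ) (c : ℕ) (s' y' : List ℕ) (i : ℕ) (hi : 1 ≤ i)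
    (hp : p'.length = i - 1) :
    pcomp (p' ++ c :: s') i y' = p' ++ y'.map (max c) ++ s' := by
  unfold pcomp
  rw [← hp, List.take_left' rfl, getD_append_cons, show i = p'.length + 1 by omega,
    drop_append_cons]

lemma list_pull (l : List ℕ) (sg : ℕ → K) (P S : AW K) (V : ℕ → AW K) :
    (l.map fun c => sg c • (P * (V c * S))).sum
      = P * ((l.map fun c => sg c • V c).sum * S) := by
  induction l with
  | nil => simp
  | cons c l ih =>
      simp only [List.map_cons, List.sum_cons, ih, mul_add, add_mul, mul_smul_comm,
        smul_mul_assoc]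

/-- The middle factor of the left-hand side. -/
noncomputable def Mid (b : ℕ) (y : List ℕ) : AW K :=
  ((opts γ b).map fun c => ((-1 : K) ^ (if b = c then 0 else 1)) • Kphi K γ (max c) y).sum

lemma main_LHS (y p s : List ℕ) (b i : ℕ) (hi1 : 1 ≤ i) (hp : p.length = i - 1) :
    KS K γ (fun x' => KS K γ (fun y' => sgl K (pcomp x' i y')) y) (p ++ b :: s)
      = Kl K γ p * (Mid K γ b y * Kl K γ s) := by
  rw [KS_append]
  have step : ∀ p' ∈ incrM γ p,
      KS K γ (fun z' => KS K γ (fun y' => sgl K (pcomp (p' ++ z') i y')) y) (b :: s)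
        = sgl K p' * (Mid K γ b y * Kl K γ s) := by
    intro p' hp'
    have hlen : p'.length = i - 1 := by rw [mem_incrM_length γ p p' hp', hp]
    rw [KS_cons]
    have step2 : ∀ s' ∈ incrM γ s,
        ((opts γ b).map fun c => ((-1 : K) ^ (if b = c then 0 else 1)) •
            KS K γ (fun y' => sgl K (pcomp (p' ++ c :: s') i y')) y).sum
          = (sgl K p' * Mid K γ b y) * sgl K s' := by
      intro s' hs'
      have hc : ∀ c : ℕ,
          KS K γ (fun y' => sgl K (pcomp (p' ++ c :: s') i y')) y
            = sgl K p' * (Kphi K γ (max c) y * sgl K s') := by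
        intro c
        have : ∀ y' : List ℕ, sgl K (pcomp (p' ++ c :: s') i y')
            = sgl K p' * (sgl K (y'.map (max c)) * sgl K s') := by
          intro y'
          rw [pcomp_eq p' c s' y' i hi1 hlen, ← sgl_mul, ← sgl_mul, mul_assoc]
        rw [KS_congr K γ _ _ y fun y' _ => this y', KS_mul_left]
        congr 1
        rw [KS_mul_right]
        rfl
      rw [List.map_congr_left fun c (_ : c ∈ opts γ b) => by rw [hc c]]
      rw [list_pull, Mid, mul_assoc]
    rw [KS_congr K γ _ _ s step2, KS_mul_left]
    unfold Kl
    rw [mul_assoc]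
  rw [KS_congr K γ _ _ p step]
  unfold Kl
  rw [KS_mul_right]

end Main

section Cases
variable (K : Type) [Field K] (γ : ℕ)

lemma Kl_append (u v : List ℕ) : Kl K γ (u ++ v) = Kl K γ u * Kl K γ v := by
  rw [← Kphi_id, Kphi_append, Kphi_id, Kphi_id]

lemma Kl_cons (a : ℕ) (w : List ℕ) : Kl K γ (a :: w) = hF K γ id a * Kl K γ w := by
  rw [← Kphi_id, Kphi_cons, Kphi_id]

lemma Kl_single' (a : ℕ) : Kl K γ [a] = hF K γ id a := by
  rw [show [a] = a :: ([] : List ℕ) from rfl, Kl_cons, ← Kphi_id, Kphi_nil, mul_one]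

lemma hF_max_zero (c : ℕ) : hF K γ (max c) 0 = sgl K [c] := by
  unfold hF
  simp

lemma Kphi_max_split (q t : List ℕ) (c : ℕ)
    (hq : ∀ a ∈ q, c ≤ a) (ht : ∀ a ∈ t, c ≤ a) :
    Kphi K γ (max c) (q ++ 0 :: t) = Kl K γ q * (sgl K [c] * Kl K γ t) := by
  rw [Kphi_append, Kphi_cons, hF_max_zero, Kphi_max_of_le K γ c q hq,
    Kphi_max_of_le K γ c t ht]

lemma Kphi_max_zero (y : List ℕ) (c : ℕ) (hc : minNZ γ y < c) (hcγ : c ≤ γ) :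
    Kphi K γ (max c) y = 0 := by
  have hm : minNZ γ y < γ := lt_of_lt_of_le hc hcγ
  obtain ⟨hmem, hne⟩ := minNZ_mem γ y hm
  exact Kphi_collapse K γ c (minNZ γ y) y hmem (by omega) hc hcγ

lemma Mid_case1 (q t : List ℕ) (b : ℕ)
    (hq : ∀ a ∈ q, minNZ γ (q ++ 0 :: t) ≤ a) (ht : ∀ a ∈ t, minNZ γ (q ++ 0 :: t) ≤ a)
    (hb : b < minNZ γ (q ++ 0 :: t)) :
    Mid K γ b (q ++ 0 :: t) = Kl K γ (q ++ b :: t) := by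
  have e1 : Kphi K γ (max b) (q ++ 0 :: t) = Kl K γ q * (sgl K [b] * Kl K γ t) :=
    Kphi_max_split K γ q t b (fun a ha => le_trans (le_of_lt hb) (hq a ha))
      (fun a ha => le_trans (le_of_lt hb) (ht a ha))
  rw [Kl_append, Kl_cons]
  unfold Mid opts hF
  by_cases hcond : 1 ≤ b ∧ b + 1 ≤ γ
  · have e2 : Kphi K γ (max (b + 1)) (q ++ 0 :: t)
        = Kl K γ q * (sgl K [b + 1] * Kl K γ t) :=
      Kphi_max_split K γ q t (b + 1)
        (fun a ha => le_trans (by omega : b + 1 ≤ minNZ γ (q ++ 0 :: t)) (hq a ha))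
        (fun a ha => le_trans (by omega : b + 1 ≤ minNZ γ (q ++ 0 :: t)) (ht a ha))
    have hne : ¬(b = b + 1) := by omega
    simp only [if_pos hcond, List.map_cons, List.map_nil, List.sum_cons, List.sum_nil,
      e1, e2, hne, if_true, if_false, ite_true, ite_false, if_neg hne, pow_zero, pow_one,
      one_smul, neg_smul, add_zero, id_eq]
    try simp only [ite_true, if_true, pow_zero, pow_one, one_smul, neg_smul]
    try noncomm_ring
  · simp only [if_neg hcond, List.map_cons, List.map_nil, List.sum_cons, List.sum_nil,
      e1, pow_zero, one_smul, add_zero, id_eq]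
    try simp only [ite_true, if_true, pow_zero, pow_one, one_smul, neg_smul]
    try noncomm_ring

lemma Mid_case2 (q t : List ℕ) (b : ℕ)
    (hq : ∀ a ∈ q, minNZ γ (q ++ 0 :: t) ≤ a) (ht : ∀ a ∈ t, minNZ γ (q ++ 0 :: t) ≤ a)
    (hb : minNZ γ (q ++ 0 :: t) = b) :
    Mid K γ b (q ++ 0 :: t) = Kl K γ q * (sgl K [b] * Kl K γ t) := by
  have e1 : Kphi K γ (max b) (q ++ 0 :: t) = Kl K γ q * (sgl K [b] * Kl K γ t) :=
    Kphi_max_split K γ q t b (fun a ha => hb ▸ hq a ha) (fun a ha => hb ▸ ht a ha)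
  unfold Mid opts
  by_cases hcond : 1 ≤ b ∧ b + 1 ≤ γ
  · have e2 : Kphi K γ (max (b + 1)) (q ++ 0 :: t) = 0 :=
      Kphi_max_zero K γ _ (b + 1) (by omega) hcond.2
    have hne : ¬(b = b + 1) := by omega
    simp only [if_pos hcond, List.map_cons, List.map_nil, List.sum_cons, List.sum_nil,
      e1, e2, smul_zero, add_zero]
    try simp only [ite_true, if_true, pow_zero, pow_one, one_smul, neg_smul]
    try noncomm_ring
  · simp only [if_neg hcond, List.map_cons, List.map_nil, List.sum_cons, List.sum_nil,
      e1, add_zero]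
    try simp only [ite_true, if_true, pow_zero, pow_one, one_smul, neg_smul]
    try noncomm_ring

lemma Mid_case3 (q t : List ℕ) (b : ℕ)
    (hb : minNZ γ (q ++ 0 :: t) < b) (hbγ : b ≤ γ) :
    Mid K γ b (q ++ 0 :: t) = 0 := by
  have e1 : Kphi K γ (max b) (q ++ 0 :: t) = 0 := Kphi_max_zero K γ _ b hb hbγ
  unfold Mid opts
  by_cases hcond : 1 ≤ b ∧ b + 1 ≤ γ
  · have e2 : Kphi K γ (max (b + 1)) (q ++ 0 :: t) = 0 :=
      Kphi_max_zero K γ _ (b + 1) (by omega) hcond.2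
    simp [hcond, e1, e2]
  · simp only [if_neg hcond, List.map_cons, List.map_nil, List.sum_cons, List.sum_nil, e1]
    simp

end Cases

section Words
variable (K : Type) [Field K] (γ : ℕ)

lemma exists_split (y : List ℕ) (h : 0 ∈ y) :
    ∃ q t, y = q ++ 0 :: t ∧ 0 ∉ q ∧ y.idxOf 0 = q.length := by
  induction y with
  | nil => simp at h
  | cons a y ih =>
      by_cases ha : a = 0
      · subst ha
        exact ⟨[], y, rfl, by simp, by simp⟩
      · have h' : 0 ∈ y := by
          rcases List.mem_cons.1 h with h'' | h''
          · exact absurd h''.symm ha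
          · exact h''
        obtain ⟨q, t, rfl, hq, hidx⟩ := ih h'
        refine ⟨a :: q, t, rfl, by simp [hq, Ne.symm ha, ha], ?_⟩
        rw [List.idxOf_cons_ne _ (by simpa using ha), hidx]
        simp

lemma set_append_cons (u : List ℕ) (b c : ℕ) (v : List ℕ) :
    (u ++ b :: v).set u.length c = u ++ c :: v := by
  induction u with
  | nil => simp
  | cons a u ih => simp [List.set, ih]

lemma sum_pull (F : Finset ℕ) (g : ℕ → AW K) (P Q T S : AW K) :
    ∑ a ∈ F, P * ((Q * (g a * T)) * S) = P * ((Q * ((∑ a ∈ F, g a) * T)) * S) := by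
  simp only [Finset.sum_mul, Finset.mul_sum]

end Words

/-- The partial composition of `Dias_γ` over the `K`-basis. -/
theorem stmt11 (K : Type) [Field K] [CharZero K] (γ : ℕ)
    (x y : List ℕ) (hx : x ∈ DiasSet γ) (hy : y ∈ DiasSet γ)
    (hx2 : 2 ≤ x.length) (hy2 : 2 ≤ y.length)
    (i : ℕ) (hi1 : 1 ≤ i) (hi2 : i ≤ x.length) :
    (x.getD (i - 1) 0 < minNZ γ y →
      compExt K (Kelt K γ x) i (Kelt K γ y) = Kelt K γ (pcomp x i y)) ∧
    (minNZ γ y = x.getD (i - 1) 0 →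
      compExt K (Kelt K γ x) i (Kelt K γ y) =
        ∑ a ∈ Finset.Icc (x.getD (i - 1) 0) γ, Kelt K γ (pcompA x i y a)) ∧
    (minNZ γ y < x.getD (i - 1) 0 →
      compExt K (Kelt K γ x) i (Kelt K γ y) = 0) := by
  obtain ⟨hxc, hxle⟩ := hx
  obtain ⟨hyc, hyle⟩ := hy
  have h0y : 0 ∈ y := List.count_pos_iff.1 (by omega)
  obtain ⟨q, t, hysplit, hq0, hidx⟩ := exists_split y h0y
  have ht0 : 0 ∉ t := by
    rw [hysplit] at hyc
    simp [List.count_append, List.count_cons] at hyc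
    have : t.count 0 = 0 := by omega
    exact List.count_eq_zero.1 this
  -- membership and bounds for letters of q and t
  have hmemq : ∀ a ∈ q, a ∈ y := fun a ha => by rw [hysplit]; exact List.mem_append_left _ ha
  have hmemt : ∀ a ∈ t, a ∈ y := fun a ha => by
    rw [hysplit]; exact List.mem_append_right _ (List.mem_cons_of_mem _ ha)
  have hqm : ∀ a ∈ q, minNZ γ y ≤ a := fun a ha =>
    minNZ_le γ y a (hmemq a ha) (fun h => hq0 (h ▸ ha))
  have htm : ∀ a ∈ t, minNZ γ y ≤ a := fun a ha =>
    minNZ_le γ y a (hmemt a ha) (fun h => ht0 (h ▸ ha))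
  -- facts about i and b
  have hi1' : i - 1 < x.length := by omega
  have hbx : x.getD (i - 1) 0 ∈ x := by
    rw [List.getD_eq_getElem _ _ hi1']; exact List.getElem_mem hi1'
  have hbγ : x.getD (i - 1) 0 ≤ γ := hxle _ hbx
  -- 1 ≤ γ
  have hγ1 : 1 ≤ γ := by
    rcases q with _ | ⟨a, q'⟩
    · rcases t with _ | ⟨a, t'⟩
      · rw [hysplit] at hy2; simp at hy2
      · have := hyle a (hmemt a (by simp))
        have : a ≠ 0 := fun h => ht0 (h ▸ by simp)
        omega
    · have := hyle a (hmemq a (by simp))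
      have : a ≠ 0 := fun h => hq0 (h ▸ by simp)
      omega
  have hm1 : 1 ≤ minNZ γ y := by
    refine le_foldr_min γ _ 1 (fun a ha => ?_) hγ1
    have := (List.mem_filter.1 ha).2
    simp only [ne_eq, decide_not, Bool.not_eq_true', decide_eq_false_iff_not] at this
    omega
  -- decomposition of x
  have hplen : (x.take (i - 1)).length = i - 1 := by
    rw [List.length_take]; omega
  have hxdec : x = x.take (i - 1) ++ (x.getD (i - 1) 0) :: x.drop i := by
    conv_lhs => rw [← List.take_append_drop (i - 1) x]
    congr 1
    rw [List.drop_eq_getElem_cons hi1', List.getD_eq_getElem _ _ hi1',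
      show i - 1 + 1 = i by omega]
  have key : compExt K (Kelt K γ x) i (Kelt K γ y)
      = (Kl K γ (x.take (i - 1))
          * (Mid K γ (x.getD (i - 1) 0) y * Kl K γ (x.drop i))).coeff := by
    rw [compExt_expand]
    have h := main_LHS K γ y (x.take (i - 1)) (x.drop i) (x.getD (i - 1) 0) i hi1 hplen
    rw [← hxdec] at h
    rw [h]
  -- the word pcomp x i y, whenever b ≤ minNZ γ y
  have hw : x.getD (i - 1) 0 ≤ minNZ γ y →
      pcomp x i y = x.take (i - 1) ++ (q ++ (x.getD (i - 1) 0) :: t) ++ x.drop i := by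
    intro hble
    unfold pcomp
    congr 1
    congr 1
    rw [hysplit, List.map_append, List.map_cons]
    congr 1
    · exact (List.map_congr_left fun a ha =>
        max_eq_right (le_trans hble (hqm a ha))).trans (List.map_id q)
    · congr 1
      · exact Nat.max_zero _
      · exact (List.map_congr_left fun a ha =>
          max_eq_right (le_trans hble (htm a ha))).trans (List.map_id t)
  refine ⟨fun hcase => ?_, fun hcase => ?_, fun hcase => ?_⟩
  · -- case 1 : b < minNZ γ y
    rw [key, Kelt_eq_Kl, hw (le_of_lt hcase), Kl_append, Kl_append]
    rw [show Mid K γ (x.getD (i - 1) 0) y = Kl K γ (q ++ (x.getD (i - 1) 0) :: t) from by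
      rw [hysplit]
      exact Mid_case1 K γ q t _ (fun a ha => hysplit ▸ hqm a ha)
        (fun a ha => hysplit ▸ htm a ha) (hysplit ▸ hcase)]
    congr 1
    noncomm_ring
  · -- case 2 : minNZ γ y = b
    have hb1 : 1 ≤ x.getD (i - 1) 0 := hcase ▸ hm1
    have hwa : ∀ a : ℕ, pcompA x i y a
        = x.take (i - 1) ++ (q ++ a :: t) ++ x.drop i := by
      intro a
      unfold pcompA
      rw [hw (le_of_eq hcase.symm), hidx]
      rw [show x.take (i - 1) ++ (q ++ (x.getD (i - 1) 0) :: t) ++ x.drop i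
            = (x.take (i - 1) ++ q) ++ (x.getD (i - 1) 0) :: (t ++ x.drop i) by
          simp [List.append_assoc]]
      rw [show i - 1 + q.length = (x.take (i - 1) ++ q).length by
          simp [hplen]]
      rw [set_append_cons]
      simp [List.append_assoc]
    rw [key]
    rw [show Mid K γ (x.getD (i - 1) 0) y
          = Kl K γ q * (sgl K [x.getD (i - 1) 0] * Kl K γ t) from by
      rw [hysplit]
      exact Mid_case2 K γ q t _ (fun a ha => hysplit ▸ hqm a ha)
        (fun a ha => hysplit ▸ htm a ha) (hysplit ▸ hcase)]
    have hterm : ∀ a ∈ Finset.Icc (x.getD (i - 1) 0) γ,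
        Kelt K γ (pcompA x i y a)
          = (Kl K γ (x.take (i - 1))
              * ((Kl K γ q * (Kl K γ [a] * Kl K γ t)) * Kl K γ (x.drop i))).coeff := by
      intro a _
      have hKa : Kl K γ [a] = hF K γ id a := Kl_single' K γ a
      rw [Kelt_eq_Kl, hwa, Kl_append, Kl_append, Kl_append, Kl_cons, hKa]
      congr 1
      noncomm_ring
    rw [Finset.sum_congr rfl hterm]
    have hs := MonoidAlgebra.coeff_sum (Finset.Icc (x.getD (i - 1) 0) γ) (fun a =>
      Kl K γ (x.take (i - 1)) * ((Kl K γ q * (Kl K γ [a] * Kl K γ t)) * Kl K γ (x.drop i)))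
    rw [sum_pull,
      Kl_telescope K γ _ hb1 (hcase ▸ hbγ)] at hs
    exact hs
  · -- case 3 : minNZ γ y < b
    rw [key]
    rw [show Mid K γ (x.getD (i - 1) 0) y = 0 from by
      rw [hysplit]
      exact Mid_case3 K γ q t _ (hysplit ▸ hcase) hbγ]
    rw [zero_mul, mul_zero, MonoidAlgebra.coeff_zero]
    rfl
end

section
/- Let γ be a natural number and M a γ-multiassociative algebra admitting a b-unit 1 for some b ∈ {1,…,γ}. Then: (i) for every a ∈ {1,…,b}, the operations ⋆_a and ⋆_b of M coincide; (ii) 1 is also an a-unit of M for every a ∈ {1,…,b}; (iii) 1 is the only unit of M, i.e., for every b' ∈ {1,…,γ}, any b'-unit of M equals 1. -/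
/-- A bilinear binary operation. -/
def IsBilinear (K P : Type) [Field K] [AddCommGroup P] [Module K P]
    (op : P → P → P) : Prop :=
  (∀ x y z : P, op (x + y) z = op x z + op y z) ∧
  (∀ x y z : P, op x (y + z) = op x y + op x z) ∧
  (∀ (c : K) (x y : P), op (c • x) y = c • op x y) ∧
  (∀ (c : K) (x y : P), op x (c • y) = c • op x y)

/-- The data of a `γ`-multiassociative algebra: bilinear operations `⋆_a` for
`a ∈ {1, …, γ}` satisfying
`(x ⋆_a y) ⋆_b z = (x ⋆_b y) ⋆_{a'} z = x ⋆_{a''} (y ⋆_b z) = x ⋆_b (y ⋆_{a'''} z)`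
for all `a, a', a'', a''' ≤ b` in `{1, …, γ}`. -/
def IsMultiAssoc (K M : Type) [Field K] [AddCommGroup M] [Module K M] (γ : ℕ)
    (star : ℕ → M → M → M) : Prop :=
  (∀ a : ℕ, 1 ≤ a → a ≤ γ → IsBilinear K M (star a)) ∧
  (∀ b : ℕ, 1 ≤ b → b ≤ γ →
    ∀ a a' a'' a''' : ℕ, 1 ≤ a → a ≤ b → 1 ≤ a' → a' ≤ b →
      1 ≤ a'' → a'' ≤ b → 1 ≤ a''' → a''' ≤ b → ∀ x y z : M,
      star b (star a x y) z = star a' (star b x y) z ∧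
      star b (star a x y) z = star a'' x (star b y z) ∧
      star b (star a x y) z = star b x (star a''' y z))

/-- If a `γ`-multiassociative algebra has a `b`-unit `1`, then for every
`a ≤ b` the operations `⋆_a` and `⋆_b` coincide, `1` is also an `a`-unit, and
`1` is the only unit. -/
theorem stmt15 (K : Type) [Field K] [CharZero K] (γ : ℕ)
    (M : Type) [AddCommGroup M] [Module K M]
    (star : ℕ → M → M → M) (hM : IsMultiAssoc K M γ star)
    (b : ℕ) (hb1 : 1 ≤ b) (hb2 : b ≤ γ) (one : M)
    (hone : ∀ x : M, star b one x = x ∧ star b x one = x) :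
    (∀ a : ℕ, 1 ≤ a → a ≤ b → ∀ x y : M, star a x y = star b x y) ∧
    (∀ a : ℕ, 1 ≤ a → a ≤ b → ∀ x : M, star a one x = x ∧ star a x one = x) ∧
    (∀ b' : ℕ, 1 ≤ b' → b' ≤ γ → ∀ one' : M,
      (∀ x : M, star b' one' x = x ∧ star b' x one' = x) → one' = one) := by
  obtain ⟨hbil, hax⟩ := hM
  have gen : ∀ c : ℕ, 1 ≤ c → c ≤ γ → ∀ u : M,
      (∀ x : M, star c u x = x ∧ star c x u = x) →
      ∀ a : ℕ, 1 ≤ a → a ≤ c → ∀ x z : M, star a x z = star c x z := by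
    intro c hc1 hc2 u hu a ha1 ha2 x z
    have h := hax c hc1 hc2 a c a a ha1 ha2 hc1 le_rfl ha1 ha2 ha1 ha2 x u z
    have e1 : star c (star a x u) z = star c (star c x u) z := h.1
    have e2 : star c (star a x u) z = star a x (star c u z) := h.2.1
    rw [(hu x).2] at e1
    rw [(hu z).1] at e2
    rw [← e2, e1]
  refine ⟨gen b hb1 hb2 one hone, ?_, ?_⟩
  · intro a ha1 ha2 x
    rw [gen b hb1 hb2 one hone a ha1 ha2, gen b hb1 hb2 one hone a ha1 ha2]
    exact hone x
  · intro b' hb'1 hb'2 one' hone'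
    have hstar : star b' one' one = star b one' one := by
      rcases le_total b' b with h | h
      · exact gen b hb1 hb2 one hone b' hb'1 h one' one
      · exact (gen b' hb'1 hb'2 one' hone' b hb1 h one' one).symm
    have h1 : star b' one' one = one := (hone' one).1
    have h2 : star b one' one = one' := (hone one').2
    rw [hstar, h2] at h1
    exact h1
end

section
/- Let γ be a natural number, M a γ-multiprojection algebra, h ∈ {1,…,γ}, and suppose M has an h-unit 1 satisfying π_a(1) = 1 for all a ∈ {1,…,h}. In the γ-pluriassociative algebra M(M) obtained by setting x ⊣_a y := x ⋆_a π_a(y) and x ⊢_a y := π_a(x) ⋆_a y: (i) for every a ∈ {1,…,h}, the element 1 is an a-bar-unit; (ii) for all a ≤ b in {1,…,h}, every a-bar-unit of M(M) is also a b-bar-unit; (iii) for every a ∈ {1,…,h} and every b with a ≤ b ≤ h, if e and e' are a-bar-units of M(M) then e ⊣_b e' = e = e' ⊢_b e; (iv) for every a ∈ {1,…,h}, the map π_a is the identity of M if and only if 1 is an a-wire-unit of M(M). -/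
/-- The data of a `γ`-multiprojection algebra: a `γ`-multiassociative algebra
together with linear endomorphisms `π_a` (`a ∈ {1, …, γ}`) that are morphisms
for all the products and satisfy `π_a ∘ π_{a'} = π_{max(a,a')}`. -/
def IsMultiProj (K M : Type) [Field K] [AddCommGroup M] [Module K M] (γ : ℕ)
    (star : ℕ → M → M → M) (pi : ℕ → M → M) : Prop :=
  IsMultiAssoc K M γ star ∧
  (∀ a : ℕ, 1 ≤ a → a ≤ γ →
    (∀ x y : M, pi a (x + y) = pi a x + pi a y) ∧
    (∀ (c : K) (x : M), pi a (c • x) = c • pi a x)) ∧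
  (∀ a b : ℕ, 1 ≤ a → a ≤ γ → 1 ≤ b → b ≤ γ → ∀ x y : M,
    pi a (star b x y) = star b (pi a x) (pi a y)) ∧
  (∀ a a' : ℕ, 1 ≤ a → a ≤ γ → 1 ≤ a' → a' ≤ γ → ∀ x : M,
    pi a (pi a' x) = pi (max a a') x)

/-- Properties of bar- and wire-units of the `γ`-pluriassociative algebra
`M(M)` (with `x ⊣_a y := x ⋆_a π_a(y)` and `x ⊢_a y := π_a(x) ⋆_a y`) built
from a unital `γ`-multiprojection algebra `M` of height `h`. -/
theorem stmt17 (K : Type) [Field K] [CharZero K] (γ : ℕ)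
    (M : Type) [AddCommGroup M] [Module K M]
    (star : ℕ → M → M → M) (pi : ℕ → M → M)
    (hM : IsMultiProj K M γ star pi)
    (h : ℕ) (hh1 : 1 ≤ h) (hh2 : h ≤ γ) (one : M)
    (hone : ∀ x : M, star h one x = x ∧ star h x one = x)
    (honepi : ∀ a : ℕ, 1 ≤ a → a ≤ h → pi a one = one)
    (dl dr : ℕ → M → M → M)
    (hdl : ∀ (a : ℕ) (x y : M), dl a x y = star a x (pi a y))
    (hdr : ∀ (a : ℕ) (x y : M), dr a x y = star a (pi a x) y) :
    (∀ a : ℕ, 1 ≤ a → a ≤ h → ∀ x : M, dl a x one = x ∧ dr a one x = x) ∧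
    (∀ a b : ℕ, 1 ≤ a → a ≤ b → b ≤ h → ∀ e : M,
      (∀ x : M, dl a x e = x ∧ dr a e x = x) →
      (∀ x : M, dl b x e = x ∧ dr b e x = x)) ∧
    (∀ a b : ℕ, 1 ≤ a → a ≤ b → b ≤ h → ∀ e e' : M,
      (∀ x : M, dl a x e = x ∧ dr a e x = x) →
      (∀ x : M, dl a x e' = x ∧ dr a e' x = x) →
      dl b e e' = e ∧ dr b e' e = e) ∧
    (∀ a : ℕ, 1 ≤ a → a ≤ h →
      ((∀ x : M, pi a x = x) ↔ (∀ x : M, dl a one x = x ∧ dr a x one = x))) := by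

  obtain ⟨⟨_, massoc⟩, _, _, hpipi⟩ := hM
  -- All products with index `≤ h` coincide with `star h`.
  have key : ∀ a : ℕ, 1 ≤ a → a ≤ h → ∀ x z : M, star a x z = star h x z := by
    intro a ha1 ha2 x z
    have H := (massoc h hh1 hh2 h a a a hh1 le_rfl ha1 ha2 ha1 ha2 ha1 ha2 x one z).1
    rw [(hone x).2] at H
    exact H.symm
  -- Any `a`-bar-unit `e` satisfies `pi b e = one` for `a ≤ b ≤ h`.
  have punit : ∀ a b : ℕ, ∀ e : M, 1 ≤ a → a ≤ b → b ≤ h →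
      (∀ x : M, dl a x e = x ∧ dr a e x = x) → pi b e = one := by
    intro a b e ha1 hab hbh he
    have ha2 : a ≤ h := hab.trans hbh
    have hb1 : 1 ≤ b := ha1.trans hab
    have h1 : pi a e = one := by
      have H := (he one).2
      rw [hdr, key a ha1 ha2, (hone (pi a e)).2] at H
      exact H
    have h2 : pi b (pi a e) = pi b e := by
      rw [hpipi b a hb1 (hbh.trans hh2) ha1 (ha2.trans hh2) e, max_eq_left hab]
    rw [← h2, h1, honepi b hb1 hbh]
  refine ⟨?_, ?_, ?_, ?_⟩
  · intro a ha1 ha2 x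
    constructor
    · rw [hdl, honepi a ha1 ha2, key a ha1 ha2]
      exact (hone x).2
    · rw [hdr, honepi a ha1 ha2, key a ha1 ha2]
      exact (hone x).1
  · intro a b ha1 hab hbh e he x
    have hb1 : 1 ≤ b := ha1.trans hab
    constructor
    · rw [hdl, punit a b e ha1 hab hbh he, key b hb1 hbh]
      exact (hone x).2
    · rw [hdr, punit a b e ha1 hab hbh he, key b hb1 hbh]
      exact (hone x).1
  · intro a b ha1 hab hbh e e' he he'
    have hb1 : 1 ≤ b := ha1.trans hab
    constructor
    · rw [hdl, punit a b e' ha1 hab hbh he', key b hb1 hbh]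
      exact (hone e).2
    · rw [hdr, punit a b e' ha1 hab hbh he', key b hb1 hbh]
      exact (hone e).1
  · intro a ha1 ha2
    constructor
    · intro hp x
      constructor
      · rw [hdl, hp, key a ha1 ha2]
        exact (hone x).1
      · rw [hdr, hp, key a ha1 ha2]
        exact (hone x).2
    · intro hw x
      have H := (hw x).1
      rw [hdl, key a ha1 ha2, (hone (pi a x)).1] at H
      exact H
end

section
/- For every natural number γ, the smallest set of nonempty words over the alphabet {0,1,…,γ} that contains the one-letter word 0 and the two-letter words 0a, 00 and a0 for all a ∈ {1,…,γ}, and that is closed under all partial compositions, is exactly the set of nonempty words over {0,1,…,γ} containing at least one occurrence of the letter 0. -/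
/-- The smallest set of words over `{0, 1, …, γ}` containing the word `0`,
the words `0a`, `00` and `a0` for `a ∈ {1, …, γ}`, and closed under all
partial compositions. -/
inductive TriasGen (γ : ℕ) : List ℕ → Prop
  | unit : TriasGen γ [0]
  | gen00 : TriasGen γ [0, 0]
  | genL : ∀ a : ℕ, 1 ≤ a → a ≤ γ → TriasGen γ [0, a]
  | genR : ∀ a : ℕ, 1 ≤ a → a ≤ γ → TriasGen γ [a, 0]
  | comp : ∀ (u v : List ℕ) (i : ℕ), TriasGen γ u → TriasGen γ v →
      1 ≤ i → i ≤ u.length → TriasGen γ (pcomp u i v)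

lemma pcomp_gen_one (b : ℕ) (v : List ℕ) : pcomp [0, b] 1 v = v ++ [b] := by
  simp [pcomp, Nat.zero_max]

lemma pcomp_gen_two (a : ℕ) (v : List ℕ) : pcomp [a, 0] 2 v = a :: v := by
  simp [pcomp, Nat.zero_max]

lemma triasGen_append_one {γ : ℕ} {u : List ℕ} (hu : TriasGen γ u) {b : ℕ} (hb : b ≤ γ) :
    TriasGen γ (u ++ [b]) := by
  rcases Nat.eq_zero_or_pos b with hb0 | hb1
  · subst hb0
    have := TriasGen.comp [0, 0] u 1 TriasGen.gen00 hu (by norm_num) (by norm_num)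
    rwa [pcomp_gen_one] at this
  · have := TriasGen.comp [0, b] u 1 (TriasGen.genL b hb1 hb) hu (by norm_num) (by norm_num)
    rwa [pcomp_gen_one] at this

lemma triasGen_cons {γ : ℕ} {v : List ℕ} (hv : TriasGen γ v) {a : ℕ} (ha : a ≤ γ) :
    TriasGen γ (a :: v) := by
  rcases Nat.eq_zero_or_pos a with ha0 | ha1
  · subst ha0
    have := TriasGen.comp [0, 0] v 2 TriasGen.gen00 hv (by norm_num) (by norm_num)
    rwa [pcomp_gen_two] at this
  · have := TriasGen.comp [a, 0] v 2 (TriasGen.genR a ha1 ha) hv (by norm_num) (by norm_num)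
    rwa [pcomp_gen_two] at this

lemma triasGen_append {γ : ℕ} {u : List ℕ} (hu : TriasGen γ u) :
    ∀ l : List ℕ, (∀ x ∈ l, x ≤ γ) → TriasGen γ (u ++ l) := by
  intro l
  induction l generalizing u with
  | nil => simpa
  | cons b l ih =>
    intro hl
    have : u ++ b :: l = (u ++ [b]) ++ l := by simp
    rw [this]
    exact ih (triasGen_append_one hu (hl b (by simp))) (fun x hx => hl x (by simp [hx]))

theorem stmt18 (γ : ℕ) (w : List ℕ) :
    TriasGen γ w ↔ (w ≠ [] ∧ (∀ l ∈ w, l ≤ γ) ∧ 1 ≤ w.count 0) := by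
  constructor
  · intro h
    induction h with
    | unit => simp
    | gen00 => simp
    | genL a h1 h2 => simp [h2]
    | genR a h1 h2 => simp [h2]
    | comp u v i hu hv hi1 hi2 ihu ihv =>
      obtain ⟨hune, hub, huc⟩ := ihu
      obtain ⟨hvne, hvb, hvc⟩ := ihv
      have hidx : i - 1 < u.length := by omega
      have hgmem : u.getD (i - 1) 0 ∈ u := by
        rw [List.getD_eq_getElem u 0 hidx]; exact List.getElem_mem hidx
      refine ⟨?_, ?_, ?_⟩
      · simp only [pcomp, ne_eq, List.append_eq_nil_iff, List.map_eq_nil_iff]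
        rintro ⟨⟨-, h⟩, -⟩
        exact hvne h
      · intro l hl
        simp only [pcomp, List.mem_append, List.mem_map] at hl
        rcases hl with (hl | ⟨b, hb, rfl⟩) | hl
        · exact hub l (List.mem_of_mem_take hl)
        · exact max_le (hub _ hgmem) (hvb b hb)
        · exact hub l (List.mem_of_mem_drop hl)
      · rw [List.one_le_count_iff]
        simp only [pcomp, List.mem_append, List.mem_map]
        rw [List.one_le_count_iff] at huc hvc
        by_cases hg : u.getD (i - 1) 0 = 0
        · exact Or.inl (Or.inr ⟨0, hvc, by omega⟩)
        · -- 0 occurs in u away from position i - 1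
          have hi' : i - 1 + 1 = i := by omega
          have hsplit : u = u.take (i - 1) ++ u[i - 1] :: u.drop i := by
            conv_lhs => rw [← List.take_append_drop (i - 1) u]
            rw [List.drop_eq_getElem_cons hidx, hi']
          rw [hsplit] at huc
          simp only [List.mem_append, List.mem_cons] at huc
          rcases huc with h0 | h0 | h0
          · exact Or.inl (Or.inl h0)
          · exact absurd (by rw [List.getD_eq_getElem u 0 hidx, ← h0]) hg
          · exact Or.inr h0
  · rintro ⟨hne, hb, hc⟩
    rw [List.one_le_count_iff] at hc
    obtain ⟨x, y, rfl⟩ := List.append_of_mem hc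
    have hy : TriasGen γ (0 :: y) := by
      have := triasGen_append (γ := γ) (u := [0]) TriasGen.unit y
        (fun z hz => hb z (by simp [hz]))
      simpa using this
    clear hne hc
    induction x with
    | nil => simpa using hy
    | cons a x ih =>
      have : TriasGen γ (x ++ 0 :: y) := ih (fun l hl => hb l (by simp at hl ⊢; tauto))
      simpa using triasGen_cons this (hb a (by simp))
end
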